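/- arXiv:math/0011239 — 11 statements merged into one kernel-verified Lean document; each statement's English description precedes it below -/
import Mathlib

section
/- Let n ≥ 1 and B ≥ 2 be integers. The function E : Δ_n → ℝ satisfies E(e(j)) = 0 for every vertex e(j) of Δ_n (0 ≤ j ≤ n), E(x) ≥ 0 for all x ∈ Δ_n, and E is approximately convex with respect to Δ_{B-1}. -/
/-!
`E(x)` is the least expected length of a `B`-ary prefix code for the distribution `x`: the
constraint is Kraft's inequality on the support of `x`. Given near-optimal codes `m₁, …, m_B`
for `x₁, …, x_B`, prefix the `i`-th code with the digit `i` and keep, for each symbol, the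
shortest resulting codeword. The exponents `1 + min {mᵢ(j) : xᵢ(j) > 0}` again satisfy Kraft's
inequality, because the `B` original Kraft sums are each at most `1` and get scaled by `1/B`,
and their expected length under `Σ tᵢ xᵢ` exceeds `Σ tᵢ E(xᵢ)` by at most one digit.
-/

open Finset

/-- `f` is approximately convex with respect to `Δ_{B-1}` on the convex set `U`,
with tolerance `ε`. -/
def ApproxConvexWrt {V : Type*} [AddCommMonoid V] [Module ℝ V]
    (B : ℕ) (U : Set V) (f : V → ℝ) (ε : ℝ) : Prop :=
  ∀ (x : Fin B → V) (t : Fin B → ℝ),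
    (∀ i, x i ∈ U) → (∀ i, 0 ≤ t i) → (∑ i, t i) = 1 →
    f (∑ i, t i • x i) ≤ (∑ i, t i * f (x i)) + ε

/-- The extremal function
`E(x) = min{ Σ m(j) x(j) : m(j) ∈ ℕ, Σ sgn(x(j)) B^{-m(j)} ≤ 1 }`. -/
noncomputable def Efun (n B : ℕ) (x : Fin (n + 1) → ℝ) : ℝ :=
  sInf { s : ℝ | ∃ m : Fin (n + 1) → ℕ,
    (∑ j, Real.sign (x j) * ((B : ℝ) ^ (m j))⁻¹) ≤ 1 ∧
    s = ∑ j, (m j : ℝ) * x j }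

lemma Real.sign_nonneg_of_nonneg {r : ℝ} (hr : 0 ≤ r) : 0 ≤ Real.sign r := by
  rcases hr.eq_or_lt with rfl | hr
  · simp
  · simp [Real.sign_of_pos hr]

lemma Real.sign_le_one (r : ℝ) : Real.sign r ≤ 1 := by
  rcases Real.sign_apply_eq r with h | h | h <;> rw [h] <;> norm_num

section SupportMin

variable {ι : Type*} {a : ι → ℝ} {k : ι → ℕ}

/-- Equal to `0` when `a` has no positive entry, as `sInf ∅ = 0` in `ℕ`. -/
noncomputable def supportMin (a : ι → ℝ) (k : ι → ℕ) : ℕ :=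
  sInf {l | ∃ i, 0 < a i ∧ k i = l}

lemma supportMin_le {i : ι} (hi : 0 < a i) : supportMin a k ≤ k i :=
  Nat.sInf_le ⟨i, hi, rfl⟩

lemma supportMin_mul_le (ha : ∀ i, 0 ≤ a i) (i : ι) :
    (supportMin a k : ℝ) * a i ≤ k i * a i := by
  rcases (ha i).eq_or_lt with hi | hi
  · simp [← hi]
  · exact mul_le_mul_of_nonneg_right (by exact_mod_cast supportMin_le hi) hi.le

lemma inv_pow_supportMin_le_sum [Fintype ι] {b : ℝ} (hb : 0 < b) (ha : ∀ i, 0 ≤ a i)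
    (hpos : ∃ i, 0 < a i) :
    (b ^ supportMin a k)⁻¹ ≤ ∑ i, Real.sign (a i) * (b ^ k i)⁻¹ := by
  obtain ⟨i₀, hi₀, hk⟩ : supportMin a k ∈ {l | ∃ i, 0 < a i ∧ k i = l} :=
    Nat.sInf_mem (by obtain ⟨i, hi⟩ := hpos; exact ⟨k i, i, hi, rfl⟩)
  calc (b ^ supportMin a k)⁻¹ = Real.sign (a i₀) * (b ^ k i₀)⁻¹ := by
        rw [Real.sign_of_pos hi₀, one_mul, hk]
    _ ≤ ∑ i, Real.sign (a i) * (b ^ k i)⁻¹ :=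
        single_le_sum (f := fun i => Real.sign (a i) * (b ^ k i)⁻¹)
          (fun i _ => mul_nonneg (Real.sign_nonneg_of_nonneg (ha i)) (by positivity))
          (mem_univ i₀)

end SupportMin

section Efun

variable {n B : ℕ}

/-- Kraft's inequality for the codeword lengths `m`, where `Real.sign` restricts the sum to
the support of `x`. -/
def SatisfiesKraft (B : ℕ) (x : Fin (n + 1) → ℝ) (m : Fin (n + 1) → ℕ) : Prop :=
  ∑ j, Real.sign (x j) * ((B : ℝ) ^ m j)⁻¹ ≤ 1

lemma Efun_le_of_satisfiesKraft {x : Fin (n + 1) → ℝ} (hx : ∀ j, 0 ≤ x j)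
    {m : Fin (n + 1) → ℕ} (hm : SatisfiesKraft B x m) :
    Efun n B x ≤ ∑ j, (m j : ℝ) * x j := by
  refine csInf_le ⟨0, ?_⟩ ⟨m, hm, rfl⟩
  rintro _ ⟨m', -, rfl⟩
  exact sum_nonneg fun j _ => mul_nonneg (by positivity) (hx j)

lemma Efun_nonneg {x : Fin (n + 1) → ℝ} (hx : ∀ j, 0 ≤ x j) : 0 ≤ Efun n B x := by
  refine Real.sInf_nonneg ?_
  rintro _ ⟨m, -, rfl⟩
  exact sum_nonneg fun j _ => mul_nonneg (by positivity) (hx j)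

lemma satisfiesKraft_const (hB : 2 ≤ B) (x : Fin (n + 1) → ℝ) :
    SatisfiesKraft B x fun _ => n + 1 := by
  have hpow : ((n : ℝ) + 1) ≤ (B : ℝ) ^ (n + 1) := by
    exact_mod_cast (Nat.lt_two_pow_self (n := n + 1)).le.trans (Nat.pow_le_pow_left hB _)
  have hpos : (0 : ℝ) < (B : ℝ) ^ (n + 1) := by positivity
  calc ∑ j, Real.sign (x j) * ((B : ℝ) ^ (n + 1))⁻¹
      ≤ ∑ _j : Fin (n + 1), ((B : ℝ) ^ (n + 1))⁻¹ :=
        sum_le_sum fun j _ =>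
          mul_le_of_le_one_left (by positivity) (Real.sign_le_one (x j))
    _ = ((n : ℝ) + 1) * ((B : ℝ) ^ (n + 1))⁻¹ := by simp
    _ ≤ 1 := by rwa [mul_inv_le_iff₀ hpos, one_mul]

lemma exists_satisfiesKraft_lt_Efun_add (hB : 2 ≤ B) (x : Fin (n + 1) → ℝ) {δ : ℝ}
    (hδ : 0 < δ) : ∃ m, SatisfiesKraft B x m ∧ ∑ j, (m j : ℝ) * x j < Efun n B x + δ := by
  obtain ⟨_, ⟨m, hm, rfl⟩, hlt⟩ :=
    Real.lt_sInf_add_pos (s := {s | ∃ m, SatisfiesKraft B x m ∧ s = ∑ j, (m j : ℝ) * x j})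
      ⟨_, _, satisfiesKraft_const hB x, rfl⟩ hδ
  exact ⟨m, hm, hlt⟩

lemma Efun_single (j : Fin (n + 1)) : Efun n B (Pi.single j 1) = 0 := by
  have hx : ∀ k, 0 ≤ (Pi.single j 1 : Fin (n + 1) → ℝ) k := by
    intro k
    rcases eq_or_ne k j with rfl | h <;> simp [*]
  refine le_antisymm ?_ (Efun_nonneg hx)
  calc Efun n B (Pi.single j 1) ≤ ∑ k, ((0 : ℕ) : ℝ) * (Pi.single j 1 : Fin (n + 1) → ℝ) k :=
        Efun_le_of_satisfiesKraft hx (m := fun _ => 0) (by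
          simp [SatisfiesKraft, Pi.single_apply, apply_ite Real.sign])
    _ = 0 := by simp

lemma satisfiesKraft_supportMin_add_one (hB : 0 < B) {x : Fin B → Fin (n + 1) → ℝ}
    (hx : ∀ i j, 0 ≤ x i j) {m : Fin B → Fin (n + 1) → ℕ}
    (hm : ∀ i, SatisfiesKraft B (x i) (m i)) {y : Fin (n + 1) → ℝ} (hy : ∀ j, 0 ≤ y j)
    (hsupp : ∀ j, 0 < y j → ∃ i, 0 < x i j) :
    SatisfiesKraft B y fun j => supportMin (fun i => x i j) (fun i => m i j) + 1 := by
  have hBpos : (0 : ℝ) < B := by exact_mod_cast hB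
  have hcoord : ∀ j, Real.sign (y j) *
      ((B : ℝ) ^ (supportMin (fun i => x i j) (fun i => m i j) + 1))⁻¹ ≤
        (B : ℝ)⁻¹ * ∑ i, Real.sign (x i j) * ((B : ℝ) ^ m i j)⁻¹ := by
    intro j
    rcases (hy j).eq_or_lt with hj | hj
    · rw [← hj, Real.sign_zero, zero_mul]
      exact mul_nonneg (by positivity) (sum_nonneg fun i _ =>
        mul_nonneg (Real.sign_nonneg_of_nonneg (hx i j)) (by positivity))
    · rw [Real.sign_of_pos hj, one_mul, pow_succ, mul_inv, mul_comm]
      exact mul_le_mul_of_nonneg_left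
        (inv_pow_supportMin_le_sum hBpos (fun i => hx i j) (hsupp j hj)) (by positivity)
  calc _ ≤ ∑ j, (B : ℝ)⁻¹ * ∑ i, Real.sign (x i j) * ((B : ℝ) ^ m i j)⁻¹ :=
        sum_le_sum fun j _ => hcoord j
    _ = (B : ℝ)⁻¹ * ∑ i, ∑ j, Real.sign (x i j) * ((B : ℝ) ^ m i j)⁻¹ := by
        rw [← mul_sum, sum_comm]
    _ ≤ (B : ℝ)⁻¹ * ∑ _i : Fin B, (1 : ℝ) :=
        mul_le_mul_of_nonneg_left (sum_le_sum fun i _ => hm i) (by positivity)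
    _ = 1 := by simp [hBpos.ne']

lemma Efun_sum_smul_le (hB : 0 < B) {x : Fin B → Fin (n + 1) → ℝ}
    (hx : ∀ i, x i ∈ stdSimplex ℝ (Fin (n + 1))) {t : Fin B → ℝ} (ht : ∀ i, 0 ≤ t i)
    (hsum : ∑ i, t i = 1) {m : Fin B → Fin (n + 1) → ℕ}
    (hm : ∀ i, SatisfiesKraft B (x i) (m i)) :
    Efun n B (∑ i, t i • x i) ≤ ∑ i, t i * ∑ j, (m i j : ℝ) * x i j + 1 := by
  set y := ∑ i, t i • x i
  set μ := fun j => supportMin (fun i => x i j) (fun i => m i j)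
  have hyj : ∀ j, y j = ∑ i, t i * x i j := fun j => by simp [y, Finset.sum_apply]
  have hy : y ∈ stdSimplex ℝ (Fin (n + 1)) :=
    (convex_stdSimplex ℝ _).sum_mem (fun i _ => ht i) hsum fun i _ => hx i
  have hsupp : ∀ j, 0 < y j → ∃ i, 0 < x i j := by
    intro j hj
    by_contra! h
    exact hj.not_ge (hyj j ▸ sum_nonpos fun i _ => mul_nonpos_of_nonneg_of_nonpos (ht i) (h i))
  have hμ : ∑ j, (μ j : ℝ) * y j ≤ ∑ i, t i * ∑ j, (m i j : ℝ) * x i j := by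
    simp_rw [hyj, mul_sum]
    rw [sum_comm]
    refine sum_le_sum fun i _ => sum_le_sum fun j _ => ?_
    rw [mul_left_comm]
    exact mul_le_mul_of_nonneg_left
      (supportMin_mul_le (k := fun i => m i j) (fun i => (hx i).1 j) i) (ht i)
  calc Efun n B y ≤ ∑ j, ((μ j + 1 : ℕ) : ℝ) * y j :=
        Efun_le_of_satisfiesKraft hy.1
          (satisfiesKraft_supportMin_add_one hB (fun i => (hx i).1) hm hy.1 hsupp)
    _ = ∑ j, (μ j : ℝ) * y j + ∑ j, y j := by
        push_cast
        simp only [add_mul, one_mul, sum_add_distrib]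
    _ ≤ _ := by rw [hy.2]; linarith

lemma Efun_approxConvexWrt (hB : 2 ≤ B) :
    ApproxConvexWrt B (stdSimplex ℝ (Fin (n + 1))) (Efun n B) 1 := by
  intro x t hx ht hsum
  refine le_of_forall_pos_le_add fun δ hδ => ?_
  choose m hm hlt using fun i => exists_satisfiesKraft_lt_Efun_add hB (x i) hδ
  calc Efun n B (∑ i, t i • x i) ≤ ∑ i, t i * ∑ j, (m i j : ℝ) * x i j + 1 :=
        Efun_sum_smul_le (by omega) hx ht hsum hm
    _ ≤ ∑ i, t i * (Efun n B (x i) + δ) + 1 := by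
        gcongr with i _
        exacts [ht i, (hlt i).le]
    _ = ∑ i, t i * Efun n B (x i) + 1 + δ := by
        simp only [mul_add, sum_add_distrib, ← sum_mul, hsum]
        ring

end Efun

theorem stmt0_general (n B : ℕ) (hB : 2 ≤ B) :
    (∀ j : Fin (n + 1), Efun n B (Pi.single j 1) = 0) ∧
    (∀ x ∈ stdSimplex ℝ (Fin (n + 1)), 0 ≤ Efun n B x) ∧
    ApproxConvexWrt B (stdSimplex ℝ (Fin (n + 1))) (Efun n B) 1 :=
  ⟨Efun_single, fun _ hx => Efun_nonneg hx.1, Efun_approxConvexWrt hB⟩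

theorem stmt0 (n B : ℕ) (hn : 1 ≤ n) (hB : 2 ≤ B) :
    (∀ j : Fin (n + 1), Efun n B (Pi.single j 1) = 0) ∧
    (∀ x ∈ stdSimplex ℝ (Fin (n + 1)), 0 ≤ Efun n B x) ∧
    ApproxConvexWrt B (stdSimplex ℝ (Fin (n + 1))) (Efun n B) 1 :=
  stmt0_general n B hB
end

section
/- Let n ≥ 1 and B ≥ 2 be integers. If m(0),…,m(n) are integers with m(j) ≥ 1 for each 0 ≤ j ≤ n and Σ_{j=0}^n B^{-m(j)} ≤ 1, then the index set {0,1,…,n} can be written as the disjoint union of sets P_1,…,P_B such that Σ_{j∈P_k} B^{-m(j)} ≤ 1/B for each k = 1,…,B. -/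
/-!
Multiplying by `B ^ M`, where `M = max m`, turns the terms into the integer weights
`B ^ (M - m j)`, each dividing the bin capacity `B ^ (M - 1)` and any two of them comparable under
divisibility. Pack the weights one by one, largest first. The load of every bin is then a multiple
of the weight being placed, and so is the capacity, so any bin that is not yet full has room for it;
since the total weight is at most `B` capacities, some bin is not yet full.
-/

open Finset

theorem Nat.add_le_of_lt_of_dvd {a c d : ℕ} (h : a < c) (ha : d ∣ a) (hc : d ∣ c) :
    a + d ≤ c := by
  obtain ⟨x, rfl⟩ := ha
  obtain ⟨y, rfl⟩ := hc
  have : x < y := Nat.lt_of_mul_lt_mul_left h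
  nlinarith

theorem exists_sum_fiber_le_of_le_imp_dvd {ι κ : Type*} [DecidableEq ι] [Fintype κ]
    [DecidableEq κ] [Nonempty κ] (w : ι → ℕ) (C : ℕ) (hw : ∀ i, 0 < w i)
    (hdvd : ∀ i j, w i ≤ w j → w i ∣ w j) (hC : ∀ i, w i ∣ C)
    (s : Finset ι) (hs : ∑ i ∈ s, w i ≤ Fintype.card κ * C) :
    ∃ f : ι → κ, ∀ k, ∑ i ∈ s with f i = k, w i ≤ C := by
  induction s using Finset.induction_on_min_value w with
  | empty => exact ⟨fun _ => Classical.arbitrary κ, fun _ => by simp⟩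
  | insert a s ha hmin ih =>
    rw [sum_insert ha] at hs
    obtain ⟨f, hf⟩ := ih (by omega)
    have hroom : ∃ k, ∑ i ∈ s with f i = k, w i < C := by
      have : ∑ k, ∑ i ∈ s with f i = k, w i < ∑ _k : κ, C := by
        rw [sum_fiberwise, sum_const, card_univ, smul_eq_mul]
        linarith [hw a]
      simpa using exists_lt_of_sum_lt this
    obtain ⟨k₀, hk₀⟩ := hroom
    refine ⟨Function.update f a k₀, fun k => ?_⟩
    rw [sum_filter, sum_insert ha, Function.update_self,
      sum_congr rfl fun i hi => by rw [Function.update_of_ne (ne_of_mem_of_not_mem hi ha)],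
      ← sum_filter]
    split_ifs with hk
    · subst hk
      rw [add_comm]
      exact Nat.add_le_of_lt_of_dvd hk₀ (dvd_sum fun i hi => hdvd a i (hmin i (mem_filter.1 hi).1))
        (hC a)
    · simpa using hf k

theorem inv_pow_eq_natCast_pow_div {B : ℕ} (hB : B ≠ 0) {e M : ℕ} (he : e ≤ M) :
    ((B : ℝ) ^ e)⁻¹ = ((B ^ (M - e) : ℕ) : ℝ) / (B : ℝ) ^ M := by
  have : (B : ℝ) ≠ 0 := by exact_mod_cast hB
  rw [eq_div_iff (by positivity), Nat.cast_pow, pow_sub₀ _ this he, mul_comm]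

theorem stmt1_general (n B : ℕ) (hB : 2 ≤ B)
    (m : Fin (n + 1) → ℕ) (hm : ∀ j, 1 ≤ m j)
    (hsum : (∑ j, ((B : ℝ) ^ (m j))⁻¹) ≤ 1) :
    ∃ P : Fin B → Finset (Fin (n + 1)),
      (∀ k l, k ≠ l → Disjoint (P k) (P l)) ∧
      (Finset.univ.biUnion P = Finset.univ) ∧
      (∀ k, (∑ j ∈ P k, ((B : ℝ) ^ (m j))⁻¹) ≤ 1 / B) := by
  have : Nonempty (Fin B) := ⟨⟨0, by omega⟩⟩
  set M := univ.sup m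
  have hmM (j) : m j ≤ M := le_sup (mem_univ j)
  have hM : 1 ≤ M := (hm 0).trans (hmM 0)
  have hscale (s : Finset (Fin (n + 1))) : ∑ j ∈ s, ((B : ℝ) ^ (m j))⁻¹ =
      ((∑ j ∈ s, B ^ (M - m j) : ℕ) : ℝ) / (B : ℝ) ^ M := by
    rw [Nat.cast_sum, sum_div]
    exact sum_congr rfl fun j _ => inv_pow_eq_natCast_pow_div (by omega) (hmM j)
  have htotal : ∑ j, B ^ (M - m j) ≤ Fintype.card (Fin B) * B ^ (M - 1) := by
    rw [hscale, div_le_one (by positivity)] at hsum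
    rw [Fintype.card_fin, ← pow_succ', Nat.sub_add_cancel hM]
    exact_mod_cast hsum
  obtain ⟨f, hf⟩ := exists_sum_fiber_le_of_le_imp_dvd (fun j => B ^ (M - m j)) (B ^ (M - 1))
    (fun j => by positivity)
    (fun i j h => (Nat.pow_dvd_pow_iff_le_right hB).2 ((Nat.pow_le_pow_iff_right hB).1 h))
    (fun j => pow_dvd_pow _ (by have := hm j; omega)) univ htotal
  refine ⟨fun k => {j | f j = k},
    fun k l hkl => disjoint_filter.2 fun _ _ h₁ h₂ => hkl (h₁.symm.trans h₂),
    biUnion_filter_eq_of_maps_to fun _ _ => mem_univ _, fun k => ?_⟩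
  have hpow : (B : ℝ) ^ M = B * (B : ℝ) ^ (M - 1) := by
    rw [← pow_succ', Nat.sub_add_cancel hM]
  rw [hscale, div_le_div_iff₀ (by positivity) (by positivity), one_mul, hpow, mul_comm]
  exact mul_le_mul_of_nonneg_left (by exact_mod_cast hf k) (by positivity)

theorem stmt1 (n B : ℕ) (hn : 1 ≤ n) (hB : 2 ≤ B)
    (m : Fin (n + 1) → ℕ) (hm : ∀ j, 1 ≤ m j)
    (hsum : (∑ j, ((B : ℝ) ^ (m j))⁻¹) ≤ 1) :
    ∃ P : Fin B → Finset (Fin (n + 1)),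
      (∀ k l, k ≠ l → Disjoint (P k) (P l)) ∧
      (Finset.univ.biUnion P = Finset.univ) ∧
      (∀ k, (∑ j ∈ P k, ((B : ℝ) ^ (m j))⁻¹) ≤ 1 / B) :=
  stmt1_general n B hB m hm hsum
end

section
/- Let n ≥ 1 and B ≥ 2 be integers. The function E is extremal: if h : Δ_n → ℝ is approximately convex with respect to Δ_{B-1} and h(e(j)) ≤ 0 for every vertex e(j) of Δ_n (0 ≤ j ≤ n), then h(x) ≤ E(x) for all x ∈ Δ_n. -/
open Finset

/-!
For `m` satisfying the Kraft inequality `∑_{x j ≠ 0} B ^ (-m j) ≤ 1` we show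
`h x ≤ ∑ m j * x j` by induction on `∑ m j`. If `m j = 0` for some `j` in the support of `x`,
the Kraft inequality forces `x` to be the vertex `e j`. Otherwise the weights `B ^ (-m j)`,
being powers of `B`, can be packed into `B` bins of mass at most `1 / B` each. Splitting `x`
along the bins writes it as a convex combination `∑ tᵢ yᵢ` of `B` points of the simplex whose
supports satisfy the Kraft inequality for `m - 1`; approximate convexity and induction give
`h x ≤ ∑ tᵢ ∑ (m j - 1) yᵢ j + 1 = ∑ m j * x j`.
-/

theorem exists_bin_packing_pow {ι : Type*} [DecidableEq ι] {B k C : ℕ} (hB : 0 < B) (hk : 0 < k)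
    (e : ι → ℕ) (s : Finset ι) (he : ∀ j ∈ s, e j ≤ C) (hsum : ∑ j ∈ s, B ^ e j ≤ k * B ^ C) :
    ∃ f : ι → Fin k, ∀ i, ∑ j ∈ s with f j = i, B ^ e j ≤ B ^ C := by
  induction s using Finset.induction_on_min_value e with
  | empty => exact ⟨fun _ => ⟨0, hk⟩, fun i => by simp⟩
  | insert a s ha hmin ih =>
    rw [sum_insert ha] at hsum
    obtain ⟨f, hf⟩ := ih (fun j hj => he j (mem_insert_of_mem hj)) (by omega)
    -- every load is a multiple of the smallest item `B ^ e a`, so a bin that cannot take it is full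
    obtain ⟨i₀, hi₀⟩ : ∃ i₀, ∑ j ∈ s with f j = i₀, B ^ e j + B ^ e a ≤ B ^ C := by
      by_contra! hfull
      have hload : ∀ i, ∑ j ∈ s with f j = i, B ^ e j = B ^ C := fun i =>
        (hf i).antisymm <| Nat.le_of_lt_add_of_dvd (hfull i)
          (pow_dvd_pow B (he a (mem_insert_self a s)))
          (dvd_sum fun j hj => pow_dvd_pow B (hmin j (mem_filter.1 hj).1))
      have htotal := sum_fiberwise s f (fun j => B ^ e j)
      simp only [hload, sum_const, card_univ, Fintype.card_fin, smul_eq_mul] at htotal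
      have : 0 < B ^ e a := by positivity
      omega
    refine ⟨Function.update f a i₀, fun i => ?_⟩
    have hs : ∀ i, s.filter (fun j => Function.update f a i₀ j = i) = s.filter (f · = i) :=
      fun i => filter_congr fun j hj => by rw [Function.update_of_ne (ne_of_mem_of_not_mem hj ha)]
    rw [filter_insert, Function.update_self, hs]
    split_ifs with hi
    · rw [sum_insert (fun h => ha (mem_filter.1 h).1), add_comm, ← hi]
      exact hi₀
    · exact hf i

theorem exists_split_of_kraft {ι : Type*} [DecidableEq ι] {B : ℕ} (hB : 0 < B)
    (s : Finset ι) (m : ι → ℕ) (hm : ∀ j ∈ s, 1 ≤ m j)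
    (hkraft : ∑ j ∈ s, ((B : ℝ) ^ m j)⁻¹ ≤ 1) :
    ∃ f : ι → Fin B, ∀ i, ∑ j ∈ s with f j = i, ((B : ℝ) ^ (m j - 1))⁻¹ ≤ 1 := by
  set C := s.sup m
  have hmC : ∀ j ∈ s, m j ≤ C := fun j hj => le_sup hj
  have hB₀ : (B : ℝ) ≠ 0 := by positivity
  -- scale the weights `B ^ (1 - m j)` by `B ^ C` to make them natural numbers
  have hscale : ∀ j ∈ s, (B : ℝ) ^ (C - (m j - 1)) = B ^ C * ((B : ℝ) ^ (m j - 1))⁻¹ :=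
    fun j hj => pow_sub₀ _ hB₀ (by have := hmC j hj; omega)
  obtain ⟨f, hf⟩ := exists_bin_packing_pow (C := C) hB hB (fun j => C - (m j - 1)) s
    (fun _ _ => by omega) <| by
      have hshift : ∑ j ∈ s, ((B : ℝ) ^ (m j - 1))⁻¹ = B * ∑ j ∈ s, ((B : ℝ) ^ m j)⁻¹ := by
        rw [mul_sum]
        refine sum_congr rfl fun j hj => ?_
        rw [pow_sub₀ _ hB₀ (hm j hj), pow_one, mul_inv, inv_inv, mul_comm]
      have : ∑ j ∈ s, (B : ℝ) ^ (C - (m j - 1)) ≤ B * B ^ C := by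
        rw [sum_congr rfl hscale, ← mul_sum, hshift, ← mul_assoc, mul_comm ((B : ℝ) ^ C)]
        exact mul_le_of_le_one_right (by positivity) hkraft
      exact_mod_cast this
  refine ⟨f, fun i => ?_⟩
  have hload : ∑ j ∈ s with f j = i, (B : ℝ) ^ (C - (m j - 1)) ≤ B ^ C := by exact_mod_cast hf i
  rw [sum_congr rfl fun j hj => hscale j (mem_filter.1 hj).1, ← mul_sum] at hload
  exact (mul_le_iff_le_one_right (by positivity)).1 hload

section Blocks

variable {ι κ : Type*} [Fintype ι] [DecidableEq κ]

def blockMass (x : ι → ℝ) (f : ι → κ) (k : κ) : ℝ := ∑ j with f j = k, x j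

/-- When the block `f ⁻¹' {k}` carries no mass the value is irrelevant; we take `x` itself. -/
noncomputable def blockPoint (x : ι → ℝ) (f : ι → κ) (k : κ) : ι → ℝ :=
  if blockMass x f k = 0 then x else (blockMass x f k)⁻¹ • fun j => if f j = k then x j else 0

variable {x : ι → ℝ} (f : ι → κ)

theorem blockMass_nonneg (hx : ∀ j, 0 ≤ x j) (k : κ) : 0 ≤ blockMass x f k :=
  sum_nonneg fun j _ => hx j

theorem sum_blockMass [Fintype κ] : ∑ k, blockMass x f k = ∑ j, x j :=
  sum_fiberwise univ f x

theorem blockMass_smul_blockPoint (hx : ∀ j, 0 ≤ x j) (k : κ) :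
    blockMass x f k • blockPoint x f k = fun j => if f j = k then x j else 0 := by
  unfold blockPoint
  split_ifs with h0
  · have hzero := (sum_eq_zero_iff_of_nonneg fun j _ => hx j).1 h0
    ext j
    split_ifs with hj
    · simp [hzero j (mem_filter.2 ⟨mem_univ j, hj⟩)]
    · simp [h0]
  · rw [smul_inv_smul₀ h0]

theorem sum_blockMass_smul_blockPoint [Fintype κ] (hx : ∀ j, 0 ≤ x j) :
    ∑ k, blockMass x f k • blockPoint x f k = x := by
  ext j
  simp [blockMass_smul_blockPoint f hx]

theorem blockPoint_mem_stdSimplex (hx : x ∈ stdSimplex ℝ ι) (k : κ) :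
    blockPoint x f k ∈ stdSimplex ℝ ι := by
  unfold blockPoint
  split_ifs with h0
  · exact hx
  · refine ⟨fun j => smul_nonneg (inv_nonneg.2 (blockMass_nonneg f hx.1 k)) ?_, ?_⟩
    · dsimp only
      split_ifs
      exacts [hx.1 j, le_rfl]
    · simp only [Pi.smul_apply, smul_eq_mul, ← mul_sum, ← sum_filter]
      exact inv_mul_cancel₀ h0

theorem blockPoint_ne_zero {k : κ} (hk : blockMass x f k ≠ 0) {j : ι}
    (hj : blockPoint x f k j ≠ 0) : f j = k ∧ x j ≠ 0 := by
  simp only [blockPoint, if_neg hk, Pi.smul_apply, smul_eq_mul] at hj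
  split_ifs at hj with hfj
  · exact ⟨hfj, right_ne_zero_of_mul hj⟩
  · simp at hj

end Blocks

section Extremal

variable {ι : Type*} [Fintype ι] [DecidableEq ι]

theorem eq_single_of_kraft {B : ℕ} (hB : 0 < B) {m : ι → ℕ} {x : ι → ℝ}
    (hx : x ∈ stdSimplex ℝ ι) (hkraft : ∑ j with x j ≠ 0, ((B : ℝ) ^ m j)⁻¹ ≤ 1)
    {j₀ : ι} (hxj₀ : x j₀ ≠ 0) (hmj₀ : m j₀ = 0) :
    x = Pi.single j₀ 1 := by
  have hzero : ∀ j ≠ j₀, x j = 0 := by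
    intro j hj
    by_contra hxj
    have hpair : ∑ i ∈ {j₀, j}, ((B : ℝ) ^ m i)⁻¹ ≤ 1 := by
      refine (sum_le_sum_of_subset_of_nonneg ?_ fun _ _ _ => by positivity).trans hkraft
      intro i hi
      rcases mem_insert.1 hi with rfl | hi
      · simpa
      · simpa [mem_singleton.1 hi]
    rw [sum_pair hj.symm, hmj₀, pow_zero, inv_one] at hpair
    have : (0 : ℝ) < ((B : ℝ) ^ m j)⁻¹ := by positivity
    linarith
  have hone : x j₀ = 1 := by rw [← hx.2, sum_eq_single j₀ (fun j _ => hzero j) (by simp)]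
  ext j
  by_cases hj : j = j₀
  · subst hj; simp [hone]
  · simp [hj, hzero j hj]

theorem apply_le_sum_mul_of_kraft {B : ℕ} (hB : 0 < B) {g : (ι → ℝ) → ℝ}
    (hg : ApproxConvexWrt B (stdSimplex ℝ ι) g 1) (hvert : ∀ j, g (Pi.single j 1) ≤ 0)
    (m : ι → ℕ) (x : ι → ℝ) (hx : x ∈ stdSimplex ℝ ι)
    (hkraft : ∑ j with x j ≠ 0, ((B : ℝ) ^ m j)⁻¹ ≤ 1) :
    g x ≤ ∑ j, (m j : ℝ) * x j := by
  by_cases hzero : ∃ j, x j ≠ 0 ∧ m j = 0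
  · obtain ⟨j₀, hxj₀, hmj₀⟩ := hzero
    calc g x ≤ 0 := eq_single_of_kraft hB hx hkraft hxj₀ hmj₀ ▸ hvert j₀
      _ ≤ ∑ j, (m j : ℝ) * x j := sum_nonneg fun j _ => mul_nonneg (Nat.cast_nonneg _) (hx.1 j)
  have hm : ∀ j, x j ≠ 0 → 1 ≤ m j := fun j hxj =>
    Nat.one_le_iff_ne_zero.2 fun hmj => hzero ⟨j, hxj, hmj⟩
  obtain ⟨f, hf⟩ := exists_split_of_kraft hB _ m (fun j hj => hm j (mem_filter.1 hj).2) hkraft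
  set t := blockMass x f
  set y := blockPoint x f
  have hy : ∀ i, t i ≠ 0 → g (y i) ≤ ∑ j, ((m j - 1 : ℕ) : ℝ) * y i j := fun i hti =>
    apply_le_sum_mul_of_kraft hB hg hvert (fun j => m j - 1) (y i)
      (blockPoint_mem_stdSimplex f hx i) <| by
        refine (sum_le_sum_of_subset_of_nonneg (fun j hj => ?_) fun _ _ _ => by positivity).trans
          (hf i)
        obtain ⟨hfj, hxj⟩ := blockPoint_ne_zero f hti (mem_filter.1 hj).2
        simp [hfj, hxj]
  have hdecomp : ∑ i, t i • y i = x := sum_blockMass_smul_blockPoint f hx.1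
  have hlin : ∀ c : ι → ℝ, ∑ i, t i * ∑ j, c j * y i j = ∑ j, c j * x j := fun c => by
    simp only [← hdecomp, Finset.sum_apply, Pi.smul_apply, smul_eq_mul, mul_sum]
    rw [sum_comm]
    exact sum_congr rfl fun _ _ => sum_congr rfl fun _ _ => by ring
  have hshift : ∀ j, ((m j - 1 : ℕ) : ℝ) * x j = m j * x j - x j := fun j => by
    by_cases hxj : x j = 0
    · simp [hxj]
    · rw [Nat.cast_sub (hm j hxj), Nat.cast_one]
      ring
  calc g x = g (∑ i, t i • y i) := by rw [hdecomp]
    _ ≤ ∑ i, t i * g (y i) + 1 :=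
      hg y t (blockPoint_mem_stdSimplex f hx) (blockMass_nonneg f hx.1)
        ((sum_blockMass f).trans hx.2)
    _ ≤ ∑ i, t i * ∑ j, ((m j - 1 : ℕ) : ℝ) * y i j + 1 := by
      refine add_le_add_left (sum_le_sum fun i _ => ?_) 1
      by_cases hti : t i = 0
      · simp [hti]
      · exact mul_le_mul_of_nonneg_left (hy i hti) (blockMass_nonneg f hx.1 i)
    _ = ∑ j, (m j : ℝ) * x j := by
      rw [hlin, sum_congr rfl fun j _ => hshift j, sum_sub_distrib, hx.2]
      ring
termination_by ∑ j, m j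
decreasing_by
  obtain ⟨j, -, hxj⟩ := exists_ne_zero_of_sum_ne_zero (hx.2.symm ▸ one_ne_zero : ∑ j, x j ≠ 0)
  exact sum_lt_sum (fun j _ => Nat.sub_le _ _)
    ⟨j, mem_univ j, Nat.sub_lt (hm j hxj) one_pos⟩

end Extremal

theorem sum_sign_mul_eq_sum_filter {ι : Type*} [Fintype ι] {x : ι → ℝ} (hx : ∀ j, 0 ≤ x j)
    (a : ι → ℝ) : ∑ j, Real.sign (x j) * a j = ∑ j with x j ≠ 0, a j := by
  rw [sum_filter]
  refine sum_congr rfl fun j _ => ?_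
  rcases (hx j).eq_or_lt with h | h
  · simp [← h]
  · simp [Real.sign_of_pos h, h.ne']

theorem exists_kraft_exponents {ι : Type*} [Fintype ι] {B : ℕ} (hB : 2 ≤ B) (x : ι → ℝ) :
    ∃ m : ι → ℕ, ∑ j with x j ≠ 0, ((B : ℝ) ^ m j)⁻¹ ≤ 1 := by
  refine ⟨fun _ => Fintype.card ι, ?_⟩
  have hcard : (Fintype.card ι : ℝ) ≤ (B : ℝ) ^ Fintype.card ι := by
    exact_mod_cast Nat.lt_two_pow_self.le.trans (Nat.pow_le_pow_left hB _)
  calc ∑ j with x j ≠ 0, ((B : ℝ) ^ Fintype.card ι)⁻¹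
      ≤ ∑ _j : ι, ((B : ℝ) ^ Fintype.card ι)⁻¹ :=
        sum_le_sum_of_subset_of_nonneg (filter_subset _ _) fun _ _ _ => by positivity
    _ = Fintype.card ι * ((B : ℝ) ^ Fintype.card ι)⁻¹ := by simp
    _ ≤ 1 := by
      rw [← div_eq_mul_inv]
      exact div_le_one_of_le₀ hcard (by positivity)

theorem stmt2_general (n B : ℕ) (hB : 2 ≤ B)
    (h : (Fin (n + 1) → ℝ) → ℝ)
    (happrox : ApproxConvexWrt B (stdSimplex ℝ (Fin (n + 1))) h 1)
    (hvert : ∀ j : Fin (n + 1), h (Pi.single j 1) ≤ 0) :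
    ∀ x ∈ stdSimplex ℝ (Fin (n + 1)), h x ≤ Efun n B x := by
  intro x hx
  obtain ⟨m₀, hm₀⟩ := exists_kraft_exponents hB x
  refine le_csInf ⟨_, m₀, (sum_sign_mul_eq_sum_filter hx.1 _).trans_le hm₀, rfl⟩ ?_
  rintro s ⟨m, hm, rfl⟩
  rw [sum_sign_mul_eq_sum_filter hx.1] at hm
  exact apply_le_sum_mul_of_kraft (by omega) happrox hvert m x hx hm

theorem stmt2 (n B : ℕ) (hn : 1 ≤ n) (hB : 2 ≤ B)
    (h : (Fin (n + 1) → ℝ) → ℝ)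
    (happrox : ApproxConvexWrt B (stdSimplex ℝ (Fin (n + 1))) h 1)
    (hvert : ∀ j : Fin (n + 1), h (Pi.single j 1) ≤ 0) :
    ∀ x ∈ stdSimplex ℝ (Fin (n + 1)), h x ≤ Efun n B x :=
  stmt2_general n B hB h happrox hvert
end

section
/- Let n ≥ 1 and B ≥ 2 be integers. The entropy function F(x) = −Σ_{j=0}^n x(j) log_B x(j) on Δ_n is approximately convex with respect to Δ_{B-1}. -/
/-!
With `H p = ∑ⱼ negMulLog pⱼ` the natural-log entropy, `F = H / log B`. Splitting each
coordinate of `y = ∑ᵢ tᵢ xᵢ` into its summands `tᵢ xᵢ(j)` can only increase `H`, and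
`negMulLog (t x) = x negMulLog t + t negMulLog x` turns this into
`H y ≤ H t + ∑ᵢ tᵢ H xᵢ`. The mixing term `H t` is the entropy of a distribution on `B`
points, hence at most `log B` by Jensen, which becomes `1` after dividing by `log B`.
-/

open Finset

/-- The entropy function `F(x) = -Σ x(j) log_B x(j)` (with `0 log_B 0 = 0`,
which holds automatically since `Real.logb B 0 = 0`). -/
noncomputable def entropyF (n B : ℕ) (x : Fin (n + 1) → ℝ) : ℝ :=
  -∑ j, x j * Real.logb B (x j)

namespace Real

theorem negMulLog_sum_le {ι : Type*} (s : Finset ι) {a : ι → ℝ} (ha : ∀ i ∈ s, 0 ≤ a i) :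
    negMulLog (∑ i ∈ s, a i) ≤ ∑ i ∈ s, negMulLog (a i) := by
  simp only [negMulLog_eq_neg, sum_neg_distrib, neg_le_neg_iff]
  calc ∑ i ∈ s, a i * log (a i) ≤ ∑ i ∈ s, a i * log (∑ i ∈ s, a i) := by
        refine sum_le_sum fun i hi => ?_
        rcases (ha i hi).eq_or_lt with h | h
        · simp [← h]
        · exact mul_le_mul_of_nonneg_left (log_le_log h (single_le_sum ha hi)) h.le
    _ = (∑ i ∈ s, a i) * log (∑ i ∈ s, a i) := (sum_mul ..).symm

theorem sum_negMulLog_le_log_card {ι : Type*} [Fintype ι] {t : ι → ℝ}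
    (ht : t ∈ stdSimplex ℝ ι) : ∑ i, negMulLog (t i) ≤ log (Fintype.card ι) := by
  have hN : (0 : ℝ) < Fintype.card ι := by
    have : Nonempty ι := by
      by_contra h
      simpa [not_nonempty_iff.mp h] using ht.2
    exact_mod_cast Fintype.card_pos
  have jensen := concaveOn_negMulLog.le_map_sum (t := univ) (w := fun _ => (Fintype.card ι : ℝ)⁻¹)
    (p := t) (by intros; positivity) (by simp [hN.ne']) (fun i _ => ht.1 i)
  simp only [smul_eq_mul, ← mul_sum, ht.2, mul_one] at jensen
  rw [negMulLog, log_inv] at jensen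
  field_simp at jensen
  linarith

theorem sum_negMulLog_sum_smul_le {ι κ : Type*} [Fintype ι] [Fintype κ] {x : ι → κ → ℝ}
    {t : ι → ℝ} (hx : ∀ i, x i ∈ stdSimplex ℝ κ) (ht : ∀ i, 0 ≤ t i) :
    ∑ j, negMulLog ((∑ i, t i • x i) j) ≤
      ∑ i, negMulLog (t i) + ∑ i, t i * ∑ j, negMulLog (x i j) :=
  calc ∑ j, negMulLog ((∑ i, t i • x i) j)
      ≤ ∑ j, ∑ i, negMulLog (t i * x i j) := by
        refine sum_le_sum fun j _ => ?_
        simpa only [Finset.sum_apply, Pi.smul_apply, smul_eq_mul] using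
          negMulLog_sum_le univ fun i _ => mul_nonneg (ht i) ((hx i).1 j)
    _ = ∑ i, ∑ j, (x i j * negMulLog (t i) + t i * negMulLog (x i j)) := by
        rw [sum_comm]
        simp only [negMulLog_mul]
    _ = ∑ i, negMulLog (t i) + ∑ i, t i * ∑ j, negMulLog (x i j) := by
        simp only [sum_add_distrib, ← sum_mul, ← mul_sum, (hx _).2, one_mul]

end Real

open Real

theorem entropyF_eq_sum_negMulLog_div (n B : ℕ) (x : Fin (n + 1) → ℝ) :
    entropyF n B x = (∑ j, negMulLog (x j)) / log B := by
  simp only [entropyF, logb, negMulLog, sum_div, ← sum_neg_distrib]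
  congr! 1 with j
  ring

theorem stmt3_general (n B : ℕ) (hB : 2 ≤ B) :
    ApproxConvexWrt B (stdSimplex ℝ (Fin (n + 1))) (entropyF n B) 1 := by
  intro x t hx ht hsum
  have hlogB : 0 < log B := log_pos (by exact_mod_cast hB)
  simp only [entropyF_eq_sum_negMulLog_div, div_le_iff₀ hlogB]
  calc ∑ j, negMulLog ((∑ i, t i • x i) j)
      ≤ ∑ i, negMulLog (t i) + ∑ i, t i * ∑ j, negMulLog (x i j) :=
        sum_negMulLog_sum_smul_le hx ht
    _ ≤ log B + ∑ i, t i * ∑ j, negMulLog (x i j) := by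
        gcongr
        simpa using sum_negMulLog_le_log_card ⟨ht, hsum⟩
    _ = (∑ i, t i * ((∑ j, negMulLog (x i j)) / log B) + 1) * log B := by
        rw [add_comm, add_mul, one_mul, sum_mul]
        congr 1
        exact sum_congr rfl fun i _ => by field_simp

theorem stmt3 (n B : ℕ) (hn : 1 ≤ n) (hB : 2 ≤ B) :
    ApproxConvexWrt B (stdSimplex ℝ (Fin (n + 1))) (entropyF n B) 1 :=
  stmt3_general n B hB
end

section
/- Let n ≥ 1 and B ≥ 2 be integers and let x ∈ Δ_n with support A = {j : x(j) ≠ 0}. Then the entropy F(x) = −Σ_{j=0}^n x(j) log_B x(j) satisfies the variational formula F(x) = inf{ Σ_{j∈A} y(j) x(j) : y(j) ≥ 0 real numbers with Σ_{j∈A} B^{-y(j)} ≤ 1 }, and this infimum is attained. -/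
/-!
The infimum is Gibbs' inequality in disguise. For admissible `y`, the weights `q j = B ^ (-y j)`
have total mass at most `1 = ∑ x j`, so termwise `log t ≤ t - 1` at `t = q j / x j` gives
`∑ x j log_B q j ≤ ∑ x j log_B x j`, i.e. `F(x) ≤ ∑ y j x j`. Equality holds for
`y j = -log_B x j`, which is nonnegative because `x j ≤ 1` and makes `∑ B ^ (-y j) = ∑ x j = 1`.
-/

open Finset

open Real

theorem mul_log_sub_mul_log_le {p q : ℝ} (hp : 0 < p) (hq : 0 < q) :
    p * log q - p * log p ≤ q - p := by
  have h := mul_le_mul_of_nonneg_left (log_le_sub_one_of_pos (div_pos hq hp)) hp.le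
  rwa [log_div hq.ne' hp.ne', mul_sub, mul_sub_one, mul_div_cancel₀ q hp.ne'] at h

theorem sum_mul_log_le_sum_mul_log {ι : Type*} {s : Finset ι} {p q : ι → ℝ}
    (hp : ∀ i ∈ s, 0 < p i) (hq : ∀ i ∈ s, 0 < q i) (hpq : ∑ i ∈ s, q i ≤ ∑ i ∈ s, p i) :
    ∑ i ∈ s, p i * log (q i) ≤ ∑ i ∈ s, p i * log (p i) := by
  have h := sum_le_sum fun i hi => mul_log_sub_mul_log_le (hp i hi) (hq i hi)
  rw [sum_sub_distrib, sum_sub_distrib] at h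
  linarith

theorem sum_mul_logb_le_sum_mul_logb {ι : Type*} {s : Finset ι} {b : ℝ} {p q : ι → ℝ}
    (hb : 1 < b) (hp : ∀ i ∈ s, 0 < p i) (hq : ∀ i ∈ s, 0 < q i)
    (hpq : ∑ i ∈ s, q i ≤ ∑ i ∈ s, p i) :
    ∑ i ∈ s, p i * logb b (q i) ≤ ∑ i ∈ s, p i * logb b (p i) := by
  simp only [logb, ← mul_div_assoc, ← sum_div]
  exact div_le_div_of_nonneg_right (sum_mul_log_le_sum_mul_log hp hq hpq) (log_pos hb).le

theorem entropyF_eq_neg_sum_support (n B : ℕ) (x : Fin (n + 1) → ℝ) :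
    entropyF n B x = -∑ j ∈ univ.filter (fun j => x j ≠ 0), x j * logb B (x j) := by
  rw [entropyF, sum_filter_of_ne]
  intro j _ h hj
  exact h (by rw [hj, zero_mul])

theorem stmt5_general (n B : ℕ) (hB : 2 ≤ B)
    (x : Fin (n + 1) → ℝ) (hx : x ∈ stdSimplex ℝ (Fin (n + 1)))
    (A : Finset (Fin (n + 1))) (hA : A = Finset.univ.filter (fun j => x j ≠ 0)) :
    IsLeast { s : ℝ | ∃ y : Fin (n + 1) → ℝ, (∀ j, 0 ≤ y j) ∧
        (∑ j ∈ A, ((B : ℝ) ^ (y j))⁻¹) ≤ 1 ∧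
        s = ∑ j ∈ A, y j * x j }
      (entropyF n B x) := by
  have hB1 : (1 : ℝ) < B := by exact_mod_cast hB
  have hxA : ∀ j ∈ A, 0 < x j := fun j hj =>
    (hx.1 j).lt_of_ne (by rw [hA, mem_filter] at hj; exact hj.2.symm)
  have hsumA : ∑ j ∈ A, x j = 1 := by rw [hA, sum_filter_ne_zero, hx.2]
  rw [entropyF_eq_neg_sum_support, ← hA]
  constructor
  · refine ⟨fun j => -logb B (x j), fun j => ?_, ?_, ?_⟩
    · exact neg_nonneg.mpr (logb_nonpos hB1 (hx.1 j) (mem_Icc_of_mem_stdSimplex hx j).2)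
    · rw [← hsumA]
      refine (sum_congr rfl fun j hj => ?_).le
      rw [rpow_neg (by positivity), inv_inv, rpow_logb (by positivity) hB1.ne' (hxA j hj)]
    · rw [← sum_neg_distrib]
      exact sum_congr rfl fun j _ => by ring
  · rintro s ⟨y, -, hy, rfl⟩
    have hgibbs := sum_mul_logb_le_sum_mul_logb hB1 hxA (fun j _ => by positivity)
      (hsumA.symm ▸ hy)
    simp only [logb_inv, logb_rpow (by positivity : (0 : ℝ) < B) hB1.ne', mul_neg,
      sum_neg_distrib, mul_comm (x _) (y _)] at hgibbs
    linarith

theorem stmt5 (n B : ℕ) (hn : 1 ≤ n) (hB : 2 ≤ B)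
    (x : Fin (n + 1) → ℝ) (hx : x ∈ stdSimplex ℝ (Fin (n + 1)))
    (A : Finset (Fin (n + 1))) (hA : A = Finset.univ.filter (fun j => x j ≠ 0)) :
    IsLeast { s : ℝ | ∃ y : Fin (n + 1) → ℝ, (∀ j, 0 ≤ y j) ∧
        (∑ j ∈ A, ((B : ℝ) ^ (y j))⁻¹) ≤ 1 ∧
        s = ∑ j ∈ A, y j * x j }
      (entropyF n B x) :=
  stmt5_general n B hB x hx A hA
end

section
/- Let n ≥ 1 and B ≥ 2 be integers and let A be a nonempty subset of {0,1,…,n}. Then there exists a finite collection L(A) of tuples (m(j))_{j∈A} of nonnegative integers, each satisfying Σ_{j∈A} B^{-m(j)} ≤ 1, such that for every x ∈ Δ_n with supp x = A one has E(x) = min over (m(j)) ∈ L(A) of Σ_{j∈A} m(j) x(j). In particular, the restriction of E to each open facet {x ∈ Δ_n : supp x = A} is the minimum of finitely many linear functions, hence continuous and piecewise linear. -/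
open Finset

/-!
On the face `supp x = A` the constraint defining `E(x)` only involves the exponents `m(j)`,
`j ∈ A`, and the objective `m ↦ Σ_{j ∈ A} m(j) x(j)` is monotone in `m` because `x ≥ 0`. Hence the
infimum is attained on the minimal feasible exponent vectors. These form an antichain of `ℕ^(n+1)`,
which is finite by Dickson's lemma, and every feasible vector dominates one of them since `ℕ^(n+1)`
is well founded. So `E` is the minimum of the same finitely many linear functions on the whole face.
-/

section MinimalElements

variable {α β : Type*} [PartialOrder α] [WellQuasiOrderedLE α]

noncomputable def minimalsFinset (S : Set α) : Finset α :=
  (WellQuasiOrderedLE.finite_of_isAntichain (setOfPred_minimal_antichain (· ∈ S))).toFinset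

lemma mem_minimalsFinset {S : Set α} {a : α} : a ∈ minimalsFinset S ↔ Minimal (· ∈ S) a :=
  Set.Finite.mem_toFinset _

lemma minimalsFinset_nonempty {S : Set α} (hS : S.Nonempty) : (minimalsFinset S).Nonempty :=
  let ⟨a, ha⟩ := hS
  let ⟨b, _, hb⟩ := exists_minimal_le_of_wellFoundedLT (· ∈ S) a ha
  ⟨b, mem_minimalsFinset.2 hb⟩

theorem sInf_image_eq_inf'_minimalsFinset [ConditionallyCompleteLinearOrder β] {S : Set α}
    (hS : S.Nonempty) {f : α → β} (hf : MonotoneOn f S) :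
    sInf (f '' S) = (minimalsFinset S).inf' (minimalsFinset_nonempty hS) f := by
  refine IsGLB.csInf_eq ⟨?_, fun b hb => ?_⟩ (hS.image f)
  · rintro _ ⟨a, ha, rfl⟩
    obtain ⟨c, hca, hc⟩ := exists_minimal_le_of_wellFoundedLT (· ∈ S) a ha
    exact (inf'_le f (mem_minimalsFinset.2 hc)).trans (hf hc.prop ha hca)
  · obtain ⟨c, hc, hceq⟩ := exists_mem_eq_inf' (minimalsFinset_nonempty hS) f
    exact hceq ▸ hb ⟨c, (mem_minimalsFinset.1 hc).prop, rfl⟩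

end MinimalElements

section Kraft

variable {ι : Type*}

def kraftSet (B : ℕ) (A : Finset ι) : Set (ι → ℕ) :=
  {m | ∑ j ∈ A, ((B : ℝ) ^ m j)⁻¹ ≤ 1}

lemma kraftSet_nonempty {B : ℕ} (hB : 2 ≤ B) (A : Finset ι) : (kraftSet B A).Nonempty := by
  refine ⟨fun _ => #A, ?_⟩
  have hcard : (#A : ℝ) ≤ (B : ℝ) ^ #A := by
    exact_mod_cast Nat.lt_two_pow_self.le.trans (Nat.pow_le_pow_left hB _)
  simp only [kraftSet, Set.mem_ofPred_eq, sum_const, nsmul_eq_mul, ← div_eq_mul_inv]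
  exact div_le_one_of_le₀ hcard (by positivity)

lemma monotone_sum_natCast_mul {A : Finset ι} {x : ι → ℝ} (hx : ∀ j ∈ A, 0 ≤ x j) :
    Monotone fun m : ι → ℕ => ∑ j ∈ A, (m j : ℝ) * x j :=
  fun _ _ hle => sum_le_sum fun j hj =>
    mul_le_mul_of_nonneg_right (Nat.cast_le.2 (hle j)) (hx j hj)

end Kraft

lemma Efun_eq_sInf_image_kraftSet {n B : ℕ} {A : Finset (Fin (n + 1))} {x : Fin (n + 1) → ℝ}
    (hx : ∀ j, 0 ≤ x j) (hsupp : univ.filter (fun j => x j ≠ 0) = A) :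
    Efun n B x = sInf ((fun m => ∑ j ∈ A, (m j : ℝ) * x j) '' kraftSet B A) := by
  have hzero : ∀ j ∉ A, x j = 0 := fun j hj => by simpa [← hsupp] using hj
  have hpos : ∀ j ∈ A, 0 < x j := fun j hj =>
    (hx j).lt_of_ne' (by simpa [← hsupp] using hj)
  have hsign : ∀ m : Fin (n + 1) → ℕ,
      ∑ j, Real.sign (x j) * ((B : ℝ) ^ m j)⁻¹ = ∑ j ∈ A, ((B : ℝ) ^ m j)⁻¹ := fun m => by
    rw [← sum_subset (subset_univ A) fun j _ hj => by rw [hzero j hj, Real.sign_zero, zero_mul]]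
    exact sum_congr rfl fun j hj => by rw [Real.sign_of_pos (hpos j hj), one_mul]
  have hobj : ∀ m : Fin (n + 1) → ℕ, ∑ j, (m j : ℝ) * x j = ∑ j ∈ A, (m j : ℝ) * x j :=
    fun m => (sum_subset (subset_univ A) fun j _ hj => by rw [hzero j hj, mul_zero]).symm
  unfold Efun
  congr 1
  ext s
  simp only [Set.mem_ofPred_eq, Set.mem_image, kraftSet, hsign, hobj, eq_comm]

theorem stmt8_general (n B : ℕ) (hB : 2 ≤ B)
    (A : Finset (Fin (n + 1))) :
    ∃ (L : Finset (Fin (n + 1) → ℕ)) (hL : L.Nonempty),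
      (∀ m ∈ L, (∑ j ∈ A, ((B : ℝ) ^ (m j))⁻¹) ≤ 1) ∧
      (∀ x ∈ stdSimplex ℝ (Fin (n + 1)),
        Finset.univ.filter (fun j => x j ≠ 0) = A →
        Efun n B x = L.inf' hL (fun m => ∑ j ∈ A, (m j : ℝ) * x j)) ∧
      ContinuousOn (Efun n B)
        {x | x ∈ stdSimplex ℝ (Fin (n + 1)) ∧
          Finset.univ.filter (fun j => x j ≠ 0) = A} := by
  have hK := kraftSet_nonempty hB A
  have hE : ∀ x ∈ stdSimplex ℝ (Fin (n + 1)), univ.filter (fun j => x j ≠ 0) = A →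
      Efun n B x = (minimalsFinset (kraftSet B A)).inf' (minimalsFinset_nonempty hK)
        (fun m => ∑ j ∈ A, (m j : ℝ) * x j) := fun x hx hsupp => by
    rw [Efun_eq_sInf_image_kraftSet hx.1 hsupp, sInf_image_eq_inf'_minimalsFinset hK
      ((monotone_sum_natCast_mul fun j _ => hx.1 j).monotoneOn _)]
  refine ⟨_, minimalsFinset_nonempty hK, fun m hm => (mem_minimalsFinset.1 hm).prop, hE, ?_⟩
  refine (ContinuousOn.finset_inf'_apply _ fun m _ => ?_).congr fun x hx => hE x hx.1 hx.2
  fun_prop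

theorem stmt8 (n B : ℕ) (hn : 1 ≤ n) (hB : 2 ≤ B)
    (A : Finset (Fin (n + 1))) (hA : A.Nonempty) :
    ∃ (L : Finset (Fin (n + 1) → ℕ)) (hL : L.Nonempty),
      (∀ m ∈ L, (∑ j ∈ A, ((B : ℝ) ^ (m j))⁻¹) ≤ 1) ∧
      (∀ x ∈ stdSimplex ℝ (Fin (n + 1)),
        Finset.univ.filter (fun j => x j ≠ 0) = A →
        Efun n B x = L.inf' hL (fun m => ∑ j ∈ A, (m j : ℝ) * x j)) ∧
      ContinuousOn (Efun n B)
        {x | x ∈ stdSimplex ℝ (Fin (n + 1)) ∧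
          Finset.univ.filter (fun j => x j ≠ 0) = A} :=
  stmt8_general n B hB A
end

section
/- Let n ≥ 0 and B ≥ 2 be integers. Let m_0 ≥ m_1 ≥ … ≥ m_n be a non-increasing sequence of n+1 positive integers and let C > 0 be a real number such that Σ_{k=0}^n B^{-m_k} ≤ C, and such that (m_0,…,m_n) is extreme for (n,C): whenever m_0',…,m_n' are positive integers with m_k' ≤ m_k for all k and Σ_{k=0}^n B^{-m_k'} ≤ C, one has (m_0',…,m_n') = (m_0,…,m_n). Let η(n,C) = min{ j ≥ 2 : C·B^j ≥ n + B } (explicitly, η(n,C) = max{2, ⌈log_B((n+B)/C)⌉}). Then m_n < η(n,C). -/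
/-!
If `m_n ≥ η`, lower `m_n` by one. Every other entry is still `≥ m_n ≥ η`, so the new sum is at
most `n · B^{-η} + B^{-(η-1)} = (n + B) B^{-η} ≤ C`, and since `η ≥ 2` the smaller
sequence is still positive, contradicting extremality.
-/

open Finset

lemma exists_two_le_and_le_mul_pow {B C : ℝ} (hB : 1 < B) (hC : 0 < C) (x : ℝ) :
    ∃ j : ℕ, 2 ≤ j ∧ x ≤ C * B ^ j := by
  obtain ⟨j, hj⟩ := pow_unbounded_of_one_lt (x / C) hB
  refine ⟨max 2 j, le_max_left _ _, ?_⟩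
  calc x ≤ C * B ^ j := by rw [← div_le_iff₀' hC]; exact hj.le
    _ ≤ C * B ^ max 2 j := by gcongr; exacts [hB.le, le_max_right _ _]

lemma sum_inv_pow_le_of_forall_ne_le {ι : Type*} [Fintype ι] [DecidableEq ι] {B : ℝ}
    (hB : 1 ≤ B) {f : ι → ℕ} {η : ℕ} (i : ι) (hi : η ≤ f i + 1) (hf : ∀ k ≠ i, η ≤ f k) :
    ∑ k, (B ^ f k)⁻¹ ≤ ((Fintype.card ι - 1 : ℝ) + B) / B ^ η := by
  have hrest : ∑ k ∈ {i}ᶜ, (B ^ f k)⁻¹ ≤ (Fintype.card ι - 1 : ℝ) * (B ^ η)⁻¹ := by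
    have hcard : (({i}ᶜ : Finset ι).card : ℝ) = Fintype.card ι - 1 := by
      rw [card_compl, card_singleton, Nat.cast_sub (Fintype.card_pos_iff.mpr ⟨i⟩), Nat.cast_one]
    rw [← hcard, ← nsmul_eq_mul]
    refine sum_le_card_nsmul _ _ _ fun k hk => ?_
    gcongr
    exact hf k (by simpa using hk)
  have hi' : (B ^ f i)⁻¹ ≤ B * (B ^ η)⁻¹ := by
    calc (B ^ f i)⁻¹ = B * (B ^ (f i + 1))⁻¹ := by rw [pow_succ]; field_simp
      _ ≤ B * (B ^ η)⁻¹ := by gcongr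
  rw [Fintype.sum_eq_add_sum_compl i, add_div, add_comm (_ / _), div_eq_mul_inv,
    div_eq_mul_inv]
  exact add_le_add hi' hrest

theorem stmt10_general (n B : ℕ) (hB : 2 ≤ B)
    (m : Fin (n + 1) → ℕ) (hmono : ∀ i j : Fin (n + 1), i ≤ j → m j ≤ m i)
    (C : ℝ) (hC : 0 < C)
    (hext : ∀ m' : Fin (n + 1) → ℕ, (∀ k, 1 ≤ m' k) → (∀ k, m' k ≤ m k) →
      (∑ k, ((B : ℝ) ^ (m' k))⁻¹) ≤ C → m' = m) :
    m (Fin.last n) < sInf {j : ℕ | 2 ≤ j ∧ ((n : ℝ) + B) ≤ C * (B : ℝ) ^ j} := by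
  have hB1 : (1 : ℝ) < B := by exact_mod_cast hB
  set S := {j : ℕ | 2 ≤ j ∧ ((n : ℝ) + B) ≤ C * (B : ℝ) ^ j}
  set η := sInf S
  obtain ⟨hη2, hηC⟩ : η ∈ S := Nat.sInf_mem (exists_two_le_and_le_mul_pow hB1 hC _)
  by_contra! hlast
  have hmη : ∀ k, η ≤ m k := fun k => hlast.trans (hmono _ _ (Fin.le_last k))
  set m' := Function.update m (Fin.last n) (m (Fin.last n) - 1)
  have hm'pos : ∀ k, 1 ≤ m' k := by
    intro k
    rcases eq_or_ne k (Fin.last n) with rfl | hk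
    · simp only [m', Function.update_self]; omega
    · simp only [m', Function.update_of_ne hk]; linarith [hmη k]
  have hm'le : m' ≤ m := update_le_self_iff.mpr (Nat.sub_le _ _)
  have hsum' : ∑ k, ((B : ℝ) ^ m' k)⁻¹ ≤ C := by
    refine (sum_inv_pow_le_of_forall_ne_le (η := η) hB1.le (Fin.last n)
      (by simp only [m', Function.update_self]; omega)
      fun k hk => by simpa only [m', Function.update_of_ne hk] using hmη k).trans ?_
    rw [Fintype.card_fin, Nat.cast_add_one, add_sub_cancel_right, div_le_iff₀ (by positivity)]
    exact hηC
  have hlast' := congrFun (hext m' hm'pos hm'le hsum') (Fin.last n)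
  simp only [m', Function.update_self] at hlast'
  omega

theorem stmt10 (n B : ℕ) (hB : 2 ≤ B)
    (m : Fin (n + 1) → ℕ) (hmono : ∀ i j : Fin (n + 1), i ≤ j → m j ≤ m i)
    (hpos : ∀ k, 1 ≤ m k) (C : ℝ) (hC : 0 < C)
    (hsum : (∑ k, ((B : ℝ) ^ (m k))⁻¹) ≤ C)
    (hext : ∀ m' : Fin (n + 1) → ℕ, (∀ k, 1 ≤ m' k) → (∀ k, m' k ≤ m k) →
      (∑ k, ((B : ℝ) ^ (m' k))⁻¹) ≤ C → m' = m) :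
    m (Fin.last n) < sInf {j : ℕ | 2 ≤ j ∧ ((n : ℝ) + B) ≤ C * (B : ℝ) ^ j} :=
  stmt10_general n B hB m hmono C hC hext
end

section
/- Let n ≥ 1 and B ≥ 2 be integers. The set of extreme tuples E(n,B) = { (m_0,…,m_n) : m_k nonnegative integers, Σ_{k=0}^n B^{-m_k} ≤ 1, and Σ_{k=0}^n m_k x_k = E(x) for some x in the interior of Δ_n } is finite. -/
/-!
If `∑ m x = E(x)` at an interior point `x`, no positive `m k` can be lowered by one without
violating Kraft's inequality, since that would lower the cost by `x k > 0`. For such saturated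
`m` the lengths have no gap of `n + 1` consecutive integers: the terms with `m j ≤ t` sum to a
multiple of `B⁻ᵗ` below `1`, hence to at most `1 - B⁻ᵗ`, while if every other `m j` exceeded
`t + n + 1` these terms, together with the slack left by saturation, could not fill the rest.
Starting from `0`, at most `n + 1` steps of length `n + 1` reach every `m k`.
-/

open Finset

theorem Fintype.sum_apply_update_add {ι M : Type*} [Fintype ι] [DecidableEq ι] [AddCommMonoid M]
    {α : Type*} (f : ι → α → M) (m : ι → α) (k : ι) (a : α) :
    ∑ j, f j (Function.update m k a j) + f k (m k) = ∑ j, f j (m j) + f k a := by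
  simp_rw [Function.apply_update f m k a, sum_update_of_mem (mem_univ k),
    ← sum_erase_add univ _ (mem_univ k), sdiff_singleton_eq_erase]
  abel

theorem sum_inv_pow_le_one_sub_inv_pow {ι : Type*} {B : ℕ} (hB : 0 < B) {s : Finset ι}
    {m : ι → ℕ} {t : ℕ} (hm : ∀ j ∈ s, m j ≤ t) (hlt : ∑ j ∈ s, ((B : ℝ) ^ m j)⁻¹ < 1) :
    ∑ j ∈ s, ((B : ℝ) ^ m j)⁻¹ ≤ 1 - ((B : ℝ) ^ t)⁻¹ := by
  have hBt : (0 : ℝ) < (B : ℝ) ^ t := by positivity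
  -- scaled by `B ^ t`, the sum is a natural number below `B ^ t`
  have hscaled :
      ((∑ j ∈ s, B ^ (t - m j) : ℕ) : ℝ) = (B : ℝ) ^ t * ∑ j ∈ s, ((B : ℝ) ^ m j)⁻¹ := by
    rw [mul_sum]
    push_cast
    refine sum_congr rfl fun j hj => ?_
    rw [← pow_sub₀ _ (by positivity) (hm j hj)]
  have hnat : ∑ j ∈ s, B ^ (t - m j) + 1 ≤ B ^ t := by
    have : ((∑ j ∈ s, B ^ (t - m j) : ℕ) : ℝ) < ((B ^ t : ℕ) : ℝ) := by
      rw [hscaled]; push_cast; nlinarith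
    exact_mod_cast this
  have hreal : (B : ℝ) ^ t * ∑ j ∈ s, ((B : ℝ) ^ m j)⁻¹ + 1 ≤ (B : ℝ) ^ t := by
    rw [← hscaled]; exact_mod_cast hnat
  rw [le_sub_iff_add_le, ← mul_le_mul_iff_of_pos_left hBt, mul_add, mul_inv_cancel₀ hBt.ne']
  linarith

theorem Fintype.le_card_mul_of_forall_exists_lt_le {ι : Type*} [Fintype ι] (f : ι → ℕ) (g : ℕ)
    (hf : ∀ t, (∃ j, t < f j) → ∃ j, t < f j ∧ f j ≤ t + g) (k : ι) :
    f k ≤ Fintype.card ι * g := by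
  by_contra! hk
  have hmeet : ∀ i : Fin (Fintype.card ι + 1), ∃ j, i * g < f j ∧ f j ≤ i * g + g := fun i =>
    hf _ ⟨k, lt_of_le_of_lt (Nat.mul_le_mul_right g (Nat.lt_succ_iff.mp i.isLt)) hk⟩
  choose F hF using hmeet
  -- the windows `(i g, (i + 1) g]` are disjoint, so `F` would inject `Fin (card ι + 1)` into `ι`
  have hF_inj : Function.Injective F := by
    intro i i' h
    have hi := hF i
    have hi' := hF i'
    rw [h] at hi
    ext
    by_contra hne
    rcases Nat.lt_or_gt_of_ne hne with hlt | hlt <;>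
      nlinarith [Nat.mul_le_mul_right g (Nat.succ_le_of_lt hlt)]
  simpa using Fintype.card_le_of_injective F hF_inj

section Kraft

variable {ι : Type*} [Fintype ι]

noncomputable def kraftSum (B : ℕ) (m : ι → ℕ) : ℝ := ∑ j, ((B : ℝ) ^ m j)⁻¹

def IsKraftSaturated [DecidableEq ι] (B : ℕ) (m : ι → ℕ) : Prop :=
  ∀ k, 0 < m k → 1 < kraftSum B (Function.update m k (m k - 1))

theorem kraftSum_update_pred [DecidableEq ι] {B : ℕ} (hB : 0 < B) (m : ι → ℕ) {k : ι}
    (hk : 0 < m k) :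
    kraftSum B (Function.update m k (m k - 1)) = kraftSum B m + (B - 1) * ((B : ℝ) ^ m k)⁻¹ := by
  have hsum := Fintype.sum_apply_update_add (fun _ a => ((B : ℝ) ^ a)⁻¹) m k (m k - 1)
  have hpow : ((B : ℝ) ^ (m k - 1))⁻¹ = B * ((B : ℝ) ^ m k)⁻¹ := by
    obtain ⟨a, ha⟩ := Nat.exists_eq_succ_of_ne_zero hk.ne'
    rw [ha, Nat.succ_sub_one, pow_succ]
    field_simp
  unfold kraftSum
  rw [hpow] at hsum
  linarith

theorem IsKraftSaturated.exists_lt_le_add_card [DecidableEq ι] {B : ℕ} (hB : 2 ≤ B)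
    {m : ι → ℕ} (hsat : IsKraftSaturated B m) (hkraft : kraftSum B m ≤ 1) {t : ℕ}
    (ht : ∃ j, t < m j) : ∃ j, t < m j ∧ m j ≤ t + Fintype.card ι := by
  obtain ⟨j₀, hj₀⟩ := ht
  by_contra! hgap
  set c := Fintype.card ι
  set q : ℝ := ((B : ℝ) ^ (t + c + 1))⁻¹ with hq_def
  have hB1 : (1 : ℝ) ≤ B := by exact_mod_cast (by omega : 1 ≤ B)
  have hq : 0 < q := by positivity
  have hinv_le : ∀ j, t < m j → ((B : ℝ) ^ m j)⁻¹ ≤ q := fun j hj =>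
    inv_anti₀ (by positivity) (pow_le_pow_right₀ hB1 (hgap j hj))
  set high := ∑ j with t < m j, ((B : ℝ) ^ m j)⁻¹
  set low := ∑ j with ¬t < m j, ((B : ℝ) ^ m j)⁻¹
  have hsplit : high + low = kraftSum B m := sum_filter_add_sum_filter_not _ _ _
  have hhigh_pos : 0 < high := sum_pos (fun _ _ => by positivity) ⟨j₀, by simpa using hj₀⟩
  have hhigh_le : high ≤ c * q := by
    calc high ≤ ∑ j with t < m j, q := sum_le_sum fun j hj => hinv_le j (by simpa using hj)
      _ ≤ c * q := by
        rw [sum_const, nsmul_eq_mul]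
        exact mul_le_mul_of_nonneg_right (by exact_mod_cast card_le_univ _) hq.le
  have hlow : low ≤ 1 - ((B : ℝ) ^ t)⁻¹ :=
    sum_inv_pow_le_one_sub_inv_pow (by omega) (fun j hj => by simpa using hj) (by linarith)
  have hslack : 1 < kraftSum B m + (B - 1) * q := by
    have := hsat j₀ (by omega)
    rw [kraftSum_update_pred (by omega) m (by omega)] at this
    nlinarith [hinv_le j₀ hj₀]
  have hpow : ((B : ℝ) ^ t)⁻¹ = (B : ℝ) ^ (c + 1) * q := by
    rw [hq_def, show t + c + 1 = (c + 1) + t by ring, pow_add _ (c + 1) t, mul_inv,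
      mul_inv_cancel_left₀ (by positivity)]
  have hc : (B : ℝ) - 1 + c < (B : ℝ) ^ (c + 1) := by
    have : (c : ℝ) + 1 ≤ (B : ℝ) ^ c := by exact_mod_cast Nat.lt_pow_self (by omega)
    rw [pow_succ]
    nlinarith
  nlinarith

theorem IsKraftSaturated.le_card_mul_card [DecidableEq ι] {B : ℕ} (hB : 2 ≤ B) {m : ι → ℕ}
    (hsat : IsKraftSaturated B m) (hkraft : kraftSum B m ≤ 1) (k : ι) :
    m k ≤ Fintype.card ι * Fintype.card ι :=
  Fintype.le_card_mul_of_forall_exists_lt_le m _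
    (fun _ ht => hsat.exists_lt_le_add_card hB hkraft ht) k

end Kraft

theorem Efun_le_sum_mul {n B : ℕ} {x : Fin (n + 1) → ℝ} (hx : ∀ k, 0 < x k)
    {m : Fin (n + 1) → ℕ} (hm : kraftSum B m ≤ 1) :
    Efun n B x ≤ ∑ j, (m j : ℝ) * x j := by
  refine csInf_le ⟨0, ?_⟩ ⟨m, ?_, rfl⟩
  · rintro _ ⟨m', -, rfl⟩
    exact sum_nonneg fun j _ => mul_nonneg (Nat.cast_nonneg _) (hx j).le
  · simpa only [Real.sign_of_pos (hx _), one_mul, kraftSum] using hm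

theorem isKraftSaturated_of_sum_mul_eq_Efun {n B : ℕ} {x : Fin (n + 1) → ℝ}
    (hx : ∀ k, 0 < x k) {m : Fin (n + 1) → ℕ} (hm : ∑ j, (m j : ℝ) * x j = Efun n B x) :
    IsKraftSaturated B m := by
  intro k hk
  by_contra! hkraft
  have hcost := Fintype.sum_apply_update_add (fun j (a : ℕ) => (a : ℝ) * x j) m k (m k - 1)
  rw [Nat.cast_pred hk] at hcost
  linarith [hx k, hm ▸ Efun_le_sum_mul hx hkraft]

theorem stmt11_general (n B : ℕ) (hB : 2 ≤ B) :
    Set.Finite { m : Fin (n + 1) → ℕ |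
      (∑ k, ((B : ℝ) ^ (m k))⁻¹) ≤ 1 ∧
      ∃ x : Fin (n + 1) → ℝ, (∀ k, 0 < x k) ∧ (∑ k, x k) = 1 ∧
        (∑ k, (m k : ℝ) * x k) = Efun n B x } := by
  refine (Set.finite_Iic fun _ => (n + 1) * (n + 1)).subset ?_
  rintro m ⟨hkraft, x, hx, -, hm⟩ k
  simpa using (isKraftSaturated_of_sum_mul_eq_Efun hx hm).le_card_mul_card hB hkraft k

theorem stmt11 (n B : ℕ) (hn : 1 ≤ n) (hB : 2 ≤ B) :
    Set.Finite { m : Fin (n + 1) → ℕ |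
      (∑ k, ((B : ℝ) ^ (m k))⁻¹) ≤ 1 ∧
      ∃ x : Fin (n + 1) → ℝ, (∀ k, 0 < x k) ∧ (∑ k, x k) = 1 ∧
        (∑ k, (m k : ℝ) * x k) = Efun n B x } :=
  stmt11_general n B hB
end

section
/- For B = 2 and n = 2, the function E on the interior of Δ_2 is given explicitly by E(x, y, 1−x−y) = min{ 1 + x + y, 2 − x, 2 − y } for all real x, y with x > 0, y > 0, and x + y < 1. -/
/-!
For positive weights every sign is `1`, so the admissible `m` are the length vectors satisfying
Kraft's inequality `2⁻ᵃ + 2⁻ᵇ + 2⁻ᶜ ≤ 1`. Such a vector has all entries `≥ 1` and at most one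
entry equal to `1`, so it dominates one of `(1,2,2)`, `(2,1,2)`, `(2,2,1)` componentwise; these
three are admissible, and `E` is the least of their costs.
-/

open Finset

lemma one_le_of_inv_two_pow_add_le_one {a : ℕ} {q : ℝ} (hq : 0 < q)
    (h : ((2 : ℝ) ^ a)⁻¹ + q ≤ 1) : 1 ≤ a := by
  rcases Nat.eq_zero_or_pos a with rfl | ha
  · norm_num at h; linarith
  · exact ha

lemma kraft_three_cases {a b c : ℕ}
    (h : ((2 : ℝ) ^ a)⁻¹ + ((2 : ℝ) ^ b)⁻¹ + ((2 : ℝ) ^ c)⁻¹ ≤ 1) :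
    (1 ≤ a ∧ 2 ≤ b ∧ 2 ≤ c) ∨ (2 ≤ a ∧ 1 ≤ b ∧ 2 ≤ c) ∨ (2 ≤ a ∧ 2 ≤ b ∧ 1 ≤ c) := by
  have pa : (0 : ℝ) < ((2 : ℝ) ^ a)⁻¹ := by positivity
  have pb : (0 : ℝ) < ((2 : ℝ) ^ b)⁻¹ := by positivity
  have pc : (0 : ℝ) < ((2 : ℝ) ^ c)⁻¹ := by positivity
  have ha : 1 ≤ a := one_le_of_inv_two_pow_add_le_one (add_pos pb pc) (by linarith)
  have hb : 1 ≤ b := one_le_of_inv_two_pow_add_le_one (add_pos pa pc) (by linarith)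
  have hc : 1 ≤ c := one_le_of_inv_two_pow_add_le_one (add_pos pa pb) (by linarith)
  -- two lengths equal to `1` already exhaust the budget `2⁻¹ + 2⁻¹ = 1`
  have hab : ¬(a = 1 ∧ b = 1) := by rintro ⟨rfl, rfl⟩; linarith
  have hac : ¬(a = 1 ∧ c = 1) := by rintro ⟨rfl, rfl⟩; linarith
  have hbc : ¬(b = 1 ∧ c = 1) := by rintro ⟨rfl, rfl⟩; linarith
  omega

lemma min_le_of_kraft_three {a b c : ℕ} {x y z : ℝ} (hx : 0 ≤ x) (hy : 0 ≤ y) (hz : 0 ≤ z)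
    (h : ((2 : ℝ) ^ a)⁻¹ + ((2 : ℝ) ^ b)⁻¹ + ((2 : ℝ) ^ c)⁻¹ ≤ 1) :
    min (min (2 * x + 2 * y + z) (x + 2 * y + 2 * z)) (2 * x + y + 2 * z) ≤
      a * x + b * y + c * z := by
  rcases kraft_three_cases h with ⟨ha, hb, hc⟩ | ⟨ha, hb, hc⟩ | ⟨ha, hb, hc⟩ <;> rify at ha hb hc
  · exact (min_le_left _ _).trans ((min_le_right _ _).trans (by nlinarith))
  · exact (min_le_right _ _).trans (by nlinarith)
  · exact (min_le_left _ _).trans ((min_le_left _ _).trans (by nlinarith))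

lemma Efun_two_two_of_pos {x y z : ℝ} (hx : 0 < x) (hy : 0 < y) (hz : 0 < z) :
    Efun 2 2 ![x, y, z] = sInf { s : ℝ | ∃ a b c : ℕ,
      ((2 : ℝ) ^ a)⁻¹ + ((2 : ℝ) ^ b)⁻¹ + ((2 : ℝ) ^ c)⁻¹ ≤ 1 ∧ s = a * x + b * y + c * z } := by
  have hsign : ∀ m : Fin 3 → ℕ, ∑ j, Real.sign (![x, y, z] j) * ((2 : ℝ) ^ m j)⁻¹ =
      ((2 : ℝ) ^ m 0)⁻¹ + ((2 : ℝ) ^ m 1)⁻¹ + ((2 : ℝ) ^ m 2)⁻¹ := fun m => by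
    simp [Fin.sum_univ_three, Real.sign_of_pos hx, Real.sign_of_pos hy, Real.sign_of_pos hz]
  have hcost : ∀ m : Fin 3 → ℕ, ∑ j, (m j : ℝ) * ![x, y, z] j = m 0 * x + m 1 * y + m 2 * z :=
    fun m => by simp [Fin.sum_univ_three]
  refine congrArg sInf (Set.ext fun s => ⟨?_, ?_⟩)
  · rintro ⟨m, hm, rfl⟩
    exact ⟨m 0, m 1, m 2, hsign m ▸ hm, hcost m⟩
  · rintro ⟨a, b, c, h, rfl⟩
    exact ⟨![a, b, c], (hsign ![a, b, c]).trans_le h, (hcost ![a, b, c]).symm⟩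

theorem Efun_two_two_eq_min {x y z : ℝ} (hx : 0 < x) (hy : 0 < y) (hz : 0 < z) :
    Efun 2 2 ![x, y, z] =
      min (min (2 * x + 2 * y + z) (x + 2 * y + 2 * z)) (2 * x + y + 2 * z) := by
  rw [Efun_two_two_of_pos hx hy hz]
  set S := { s : ℝ | ∃ a b c : ℕ,
      ((2 : ℝ) ^ a)⁻¹ + ((2 : ℝ) ^ b)⁻¹ + ((2 : ℝ) ^ c)⁻¹ ≤ 1 ∧ s = a * x + b * y + c * z }
  have hlower : ∀ s ∈ S,
      min (min (2 * x + 2 * y + z) (x + 2 * y + 2 * z)) (2 * x + y + 2 * z) ≤ s := by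
    rintro s ⟨a, b, c, h, rfl⟩
    exact min_le_of_kraft_three hx.le hy.le hz.le h
  have h221 : 2 * x + 2 * y + z ∈ S := ⟨2, 2, 1, by norm_num, by norm_num⟩
  have h122 : x + 2 * y + 2 * z ∈ S := ⟨1, 2, 2, by norm_num, by norm_num⟩
  have h212 : 2 * x + y + 2 * z ∈ S := ⟨2, 1, 2, by norm_num, by norm_num⟩
  have hbdd : BddBelow S := ⟨_, hlower⟩
  exact le_antisymm
    (le_min (le_min (csInf_le hbdd h221) (csInf_le hbdd h122)) (csInf_le hbdd h212))
    (le_csInf ⟨_, h221⟩ hlower)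

theorem stmt12 (x y : ℝ) (hx : 0 < x) (hy : 0 < y) (hxy : x + y < 1) :
    Efun 2 2 ![x, y, 1 - x - y] = min (min (1 + x + y) (2 - x)) (2 - y) := by
  rw [Efun_two_two_eq_min hx hy (by linarith)]
  ring_nf
end

section
/- Let n ≥ 1 and B ≥ 2 be integers. The function E attains its maximum at the barycenter of Δ_n: E(x) ≤ E(x̄) for all x ∈ Δ_n, where x̄ = (1/(n+1), …, 1/(n+1)). -/
/-!
Every cyclic shift of a code-length vector `m` that is admissible at the barycenter stays admissible
at any `x` in the simplex, since `sgn (x j) ≤ 1`. Averaging the costs `∑ j, m (j + k) * x j` over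
all shifts `k` gives `(∑ j, m j) * ∑ j, x j = ∑ j, m j`, which is `n + 1` times the cost of `m` at
the barycenter; so some shift costs at most that much at `x`.
-/

open Finset

theorem exists_shift_sum_mul_le_average {G : Type*} [AddCommGroup G] [Fintype G] [Nonempty G]
    (f x : G → ℝ) (hx : ∑ j, x j = 1) :
    ∃ k, ∑ j, f (j + k) * x j ≤ (∑ i, f i) / Fintype.card G := by
  have hcard : (Fintype.card G : ℝ) ≠ 0 := by positivity
  have hshifts : ∑ k, ∑ j, f (j + k) * x j = ∑ _k : G, (∑ i, f i) / Fintype.card G := by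
    calc ∑ k, ∑ j, f (j + k) * x j = ∑ j, (∑ k, f (j + k)) * x j := by
          rw [Finset.sum_comm]
          simp only [Finset.sum_mul]
      _ = ∑ j, (∑ i, f i) * x j := by
          congr! 2 with j
          exact Equiv.sum_comp (Equiv.addLeft j) f
      _ = ∑ _k : G, (∑ i, f i) / Fintype.card G := by
          rw [← Finset.mul_sum, hx, Finset.sum_const, Finset.card_univ, nsmul_eq_mul]
          field_simp
  obtain ⟨k, -, hk⟩ := Finset.exists_le_of_sum_le Finset.univ_nonempty hshifts.le
  exact ⟨k, hk⟩

theorem Real.sign_mul_le_of_nonneg {r a : ℝ} (hr : 0 ≤ r) (ha : 0 ≤ a) : Real.sign r * a ≤ a := by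
  rcases hr.eq_or_lt with rfl | hpos
  · simpa using ha
  · rw [Real.sign_of_pos hpos, one_mul]

theorem Efun_le_of_admissible {n B : ℕ} {x : Fin (n + 1) → ℝ} (hx : ∀ j, 0 ≤ x j)
    {m : Fin (n + 1) → ℕ} (hm : ∑ j, ((B : ℝ) ^ m j)⁻¹ ≤ 1) :
    Efun n B x ≤ ∑ j, (m j : ℝ) * x j := by
  refine csInf_le ⟨0, ?_⟩ ⟨m, ?_, rfl⟩
  · rintro s ⟨m', -, rfl⟩
    exact Finset.sum_nonneg fun j _ => mul_nonneg (Nat.cast_nonneg _) (hx j)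
  · refine le_trans (Finset.sum_le_sum fun j _ => ?_) hm
    exact Real.sign_mul_le_of_nonneg (hx j) (by positivity)

theorem Efun_const_of_pos {n B : ℕ} {c : ℝ} (hc : 0 < c) :
    Efun n B (fun _ => c) =
      sInf { s : ℝ | ∃ m : Fin (n + 1) → ℕ, ∑ j, ((B : ℝ) ^ m j)⁻¹ ≤ 1 ∧
        s = ∑ j, (m j : ℝ) * c } := by
  simp only [Efun, Real.sign_of_pos hc, one_mul]

theorem sum_inv_pow_const_le_one {n B : ℕ} (hB : 2 ≤ B) :
    ∑ _j : Fin (n + 1), ((B : ℝ) ^ (n + 1))⁻¹ ≤ 1 := by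
  have hpow : ((n + 1 : ℕ) : ℝ) ≤ (B : ℝ) ^ (n + 1) := by
    exact_mod_cast (Nat.lt_pow_self (n := n + 1) hB).le
  rw [Finset.sum_const, Finset.card_univ, Fintype.card_fin, nsmul_eq_mul,
    mul_inv_le_iff₀ (by positivity), one_mul]
  exact hpow

theorem stmt13_general (n B : ℕ) (hB : 2 ≤ B) :
    ∀ x ∈ stdSimplex ℝ (Fin (n + 1)),
      Efun n B x ≤ Efun n B (fun _ => 1 / ((n : ℝ) + 1)) := by
  rintro x ⟨hx_nonneg, hx_sum⟩
  rw [Efun_const_of_pos (by positivity)]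
  refine le_csInf ⟨_, fun _ => n + 1, sum_inv_pow_const_le_one hB, rfl⟩ ?_
  rintro s ⟨m, hm, rfl⟩
  obtain ⟨k, hk⟩ := exists_shift_sum_mul_le_average (fun i => (m i : ℝ)) x hx_sum
  have hm_shift : ∑ j, ((B : ℝ) ^ m (j + k))⁻¹ ≤ 1 :=
    (Equiv.sum_comp (Equiv.addRight k) (fun i => ((B : ℝ) ^ m i)⁻¹)).trans_le hm
  calc Efun n B x ≤ ∑ j, (m (j + k) : ℝ) * x j := Efun_le_of_admissible hx_nonneg hm_shift
    _ ≤ (∑ i, (m i : ℝ)) / Fintype.card (Fin (n + 1)) := hk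
    _ = ∑ j, (m j : ℝ) * (1 / ((n : ℝ) + 1)) := by
      rw [← Finset.sum_mul, Fintype.card_fin]
      push_cast
      ring

theorem stmt13 (n B : ℕ) (hn : 1 ≤ n) (hB : 2 ≤ B) :
    ∀ x ∈ stdSimplex ℝ (Fin (n + 1)),
      Efun n B x ≤ Efun n B (fun _ => 1 / ((n : ℝ) + 1)) :=
  stmt13_general n B hB
end

section
/- Let n ≥ 1 be an integer, let ε > 0, let U ⊆ ℝ^n be convex, and suppose f : U → ℝ is ε-convex, i.e. f(tx + (1−t)y) ≤ t f(x) + (1−t) f(y) + ε for all x, y ∈ U and t ∈ [0,1]. Then there exist convex functions g, g_0 : U → ℝ such that g(x) ≤ f(x) ≤ g(x) + κ(n)·ε and |f(x) − g_0(x)| ≤ κ(n)·ε/2 for all x ∈ U, where κ(n) = ⌊log_2 n⌋ + 2(n + 1 − 2^{⌊log_2 n⌋})/(n + 1). -/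
open Finset

/-- `κ(n) = ⌊log_2 n⌋ + 2(n+1-2^⌊log_2 n⌋)/(n+1)`. -/
noncomputable def kappa2 (n : ℕ) : ℝ :=
  (⌊Real.logb 2 n⌋ : ℝ) +
    2 * ((n : ℝ) + 1 - (2 : ℝ) ^ (⌊Real.logb 2 n⌋ : ℤ)) / ((n : ℝ) + 1)

lemma pow_two_partition {ι : Type*} [DecidableEq ι] (H : ℕ) (hH : ∃ e, H = 2^e) :
    ∀ (s : Finset ι) (w : ι → ℕ), (∀ i ∈ s, ∃ e, w i = 2^e) → (∀ i ∈ s, w i ≤ H) →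
    (∑ i ∈ s, w i) ≤ 2*H → ∃ A ⊆ s, (∑ i ∈ A, w i) ≤ H ∧ (∑ i ∈ s \ A, w i) ≤ H := by
  intro s
  induction s using Finset.strongInduction with
  | _ s ih =>
    intro w hpow hle htot
    rcases s.eq_empty_or_nonempty with rfl | hne
    · exact ⟨∅, by simp⟩
    obtain ⟨j, hj, hjmin⟩ := Finset.exists_min_image s w hne
    obtain ⟨A', hA'sub, hA'1, hA'2⟩ := ih (s.erase j) (Finset.erase_ssubset hj) w
      (fun i hi => hpow i (Finset.mem_of_mem_erase hi))
      (fun i hi => hle i (Finset.mem_of_mem_erase hi))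
      (le_trans (Finset.sum_le_sum_of_subset (Finset.erase_subset j s)) htot)
    obtain ⟨C, hCsub, hC1, hC2, hCmin⟩ :
        ∃ C ⊆ s.erase j, (∑ i ∈ C, w i) ≤ H ∧ (∑ i ∈ s.erase j \ C, w i) ≤ H ∧
          (∑ i ∈ C, w i) ≤ (∑ i ∈ s.erase j \ C, w i) := by
      rcases le_total (∑ i ∈ A', w i) (∑ i ∈ s.erase j \ A', w i) with h | h
      · exact ⟨A', hA'sub, hA'1, hA'2, h⟩
      · refine ⟨s.erase j \ A', Finset.sdiff_subset, hA'2, ?_, ?_⟩ <;>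
          rw [Finset.sdiff_sdiff_eq_self hA'sub] <;> [exact hA'1; exact h]
    have hwj1 : 1 ≤ w j := by obtain ⟨e, he⟩ := hpow j hj; simp [he, Nat.one_le_two_pow]
    have hdvd : ∀ i ∈ s.erase j, w j ∣ w i := by
      intro i hi
      obtain ⟨e, he⟩ := hpow i (Finset.mem_of_mem_erase hi)
      obtain ⟨ej, hej⟩ := hpow j hj
      have : w j ≤ w i := hjmin i (Finset.mem_of_mem_erase hi)
      rw [he, hej] at this ⊢
      exact pow_dvd_pow 2 ((Nat.pow_le_pow_iff_right (by norm_num)).mp this)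
    have hdvdH : w j ∣ H := by
      obtain ⟨e, he⟩ := hH; obtain ⟨ej, hej⟩ := hpow j hj
      have : w j ≤ H := hle j hj
      rw [he, hej] at this ⊢
      exact pow_dvd_pow 2 ((Nat.pow_le_pow_iff_right (by norm_num)).mp this)
    have key : (∑ i ∈ C, w i) + w j ≤ H := by
      by_contra hcon
      push_neg at hcon
      have hdvdC : w j ∣ (∑ i ∈ C, w i) := Finset.dvd_sum (fun i hi => hdvd i (hCsub hi))
      have h3 : H - (∑ i ∈ C, w i) = 0 :=
        Nat.eq_zero_of_dvd_of_lt (Nat.dvd_sub hdvdH hdvdC) (by omega)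
      have hCeq : (∑ i ∈ C, w i) = H := by omega
      have hBeq : (∑ i ∈ s.erase j \ C, w i) = H := by omega
      have hsum : (∑ i ∈ s.erase j \ C, w i) + (∑ i ∈ C, w i) = ∑ i ∈ s.erase j, w i :=
        Finset.sum_sdiff hCsub
      have htots : w j + (∑ i ∈ s.erase j, w i) = ∑ i ∈ s, w i := Finset.add_sum_erase s w hj
      omega
    refine ⟨insert j C, ?_, ?_, ?_⟩
    · exact Finset.insert_subset hj (hCsub.trans (Finset.erase_subset j s))
    · rw [Finset.sum_insert (fun hc => (Finset.mem_erase.mp (hCsub hc)).1 rfl)]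
      omega
    · have : s \ insert j C = s.erase j \ C := by
        ext i
        simp only [Finset.mem_sdiff, Finset.mem_insert, Finset.mem_erase]
        tauto
      rw [this]; exact hC2

lemma pow_two_partition' {ι : Type*} [DecidableEq ι] (H : ℕ) (hH : ∃ e, H = 2^e)
    (s : Finset ι) (w : ι → ℕ) (hpow : ∀ i ∈ s, ∃ e, w i = 2^e) (hle : ∀ i ∈ s, w i ≤ H)
    (htot : (∑ i ∈ s, w i) ≤ 2*H) (hcard : 2 ≤ s.card) :
    ∃ A ⊆ s, A.Nonempty ∧ (s \ A).Nonempty ∧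
      (∑ i ∈ A, w i) ≤ H ∧ (∑ i ∈ s \ A, w i) ≤ H := by
  by_cases hsm : (∑ i ∈ s, w i) ≤ H
  · obtain ⟨j, hj⟩ : s.Nonempty := Finset.card_pos.mp (by omega)
    refine ⟨{j}, Finset.singleton_subset_iff.mpr hj, Finset.singleton_nonempty j, ?_, ?_, ?_⟩
    · rw [← Finset.card_pos, Finset.card_sdiff_of_subset (Finset.singleton_subset_iff.mpr hj)]
      simp; omega
    · exact le_trans (Finset.sum_le_sum_of_subset (Finset.singleton_subset_iff.mpr hj)) hsm
    · exact le_trans (Finset.sum_le_sum_of_subset Finset.sdiff_subset) hsm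
  · obtain ⟨A, hAsub, hA1, hA2⟩ := pow_two_partition H hH s w hpow hle htot
    refine ⟨A, hAsub, ?_, ?_, hA1, hA2⟩
    · rcases A.eq_empty_or_nonempty with he | h
      · exfalso; rw [he, Finset.sdiff_empty] at hA2; exact hsm hA2
      · exact h
    · rcases (s \ A).eq_empty_or_nonempty with he | h
      · exfalso
        have hAs : A = s :=
          Finset.Subset.antisymm hAsub (Finset.sdiff_eq_empty_iff_subset.mp he)
        rw [hAs] at hA1; exact hsm hA1
      · exact h

lemma jensen_tree {E : Type*} [AddCommGroup E] [Module ℝ E]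
    {U : Set E} (hU : Convex ℝ U) {f : E → ℝ} {ε : ℝ} (hε : 0 < ε)
    (hf : ∀ x ∈ U, ∀ y ∈ U, ∀ t : ℝ, 0 ≤ t → t ≤ 1 →
      f (t • x + (1 - t) • y) ≤ t * f x + (1 - t) * f y + ε) :
    ∀ (N : ℕ) (s : Finset ℕ) (lam : ℕ → ℝ) (p : ℕ → E) (d : ℕ → ℕ),
      (∑ i ∈ s, d i) < N → s.Nonempty → (∀ i ∈ s, 0 < lam i) → (∑ i ∈ s, lam i) = 1 →
      (∀ i ∈ s, p i ∈ U) → (∑ i ∈ s, ((2:ℝ) ^ d i)⁻¹) ≤ 1 →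
      f (∑ i ∈ s, lam i • p i) ≤ (∑ i ∈ s, lam i * f (p i)) + ε * (∑ i ∈ s, lam i * d i) := by
  intro N
  induction N with
  | zero => intro s lam p d hN; omega
  | succ N ih =>
    intro s lam p d hN hne hpos hsum hmem hkraft
    rcases eq_or_lt_of_le (show 1 ≤ s.card from Finset.Nonempty.card_pos hne) with h1 | h2
    · -- card s = 1
      obtain ⟨i, rfl⟩ := Finset.card_eq_one.mp h1.symm
      simp only [Finset.sum_singleton] at hsum ⊢
      rw [hsum, one_smul]
      have h0 : (0:ℝ) ≤ ε * (lam i * d i) := by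
        have := hpos i (Finset.mem_singleton_self i)
        positivity
      nlinarith [hsum]
    · -- card s ≥ 2
      have hcard2 : 2 ≤ s.card := h2
      have hd1 : ∀ i ∈ s, 1 ≤ d i := by
        intro i hi
        by_contra hdi
        have hdi0 : d i = 0 := by omega
        obtain ⟨j, hj, hji⟩ := Finset.exists_mem_ne (show 1 < s.card by omega) i
        have hsub : {i, j} ⊆ s := by
          intro x hx; rcases Finset.mem_insert.mp hx with rfl | hx
          · exact hi
          · rwa [Finset.mem_singleton.mp hx]
        have h1 : (∑ x ∈ ({i, j} : Finset ℕ), ((2:ℝ) ^ d x)⁻¹) ≤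
            ∑ x ∈ s, ((2:ℝ) ^ d x)⁻¹ :=
          Finset.sum_le_sum_of_subset_of_nonneg hsub (fun x _ _ => by positivity)
        rw [Finset.sum_insert (by simpa using (Ne.symm hji)), Finset.sum_singleton, hdi0] at h1
        have : (0:ℝ) < ((2:ℝ) ^ d j)⁻¹ := by positivity
        simp at h1
        linarith
      set D := (s.sup d) + 1 with hD
      have hdD : ∀ i ∈ s, d i ≤ D := fun i hi => le_trans (Finset.le_sup hi) (by omega)
      set w : ℕ → ℕ := fun i => 2^(D - d i) with hw
      have hwR : ∀ i ∈ s, (w i : ℝ) = 2^D * ((2:ℝ) ^ d i)⁻¹ := by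
        intro i hi
        have h1 : D - d i + d i = D := by have := hdD i hi; omega
        have : (2:ℝ)^(D - d i) * 2^(d i) = 2^D := by rw [← pow_add, h1]
        have h2 : ((2:ℝ)^(d i)) ≠ 0 := by positivity
        push_cast [hw]
        field_simp
        linarith [this]
      obtain ⟨A, hAsub, hAne, hBne, hA1, hB1⟩ := pow_two_partition' (2^(D-1)) ⟨D-1, rfl⟩ s w
        (fun i _ => ⟨D - d i, rfl⟩)
        (fun i hi => Nat.pow_le_pow_right (by norm_num)
          (by have := hd1 i hi; have := hdD i hi; omega))
        (by
          have hcast : ((∑ i ∈ s, w i : ℕ) : ℝ) ≤ 2^D := by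
            push_cast
            calc (∑ i ∈ s, (w i:ℝ)) = ∑ i ∈ s, 2^D * ((2:ℝ) ^ d i)⁻¹ :=
                  Finset.sum_congr rfl (fun i hi => by exact_mod_cast hwR i hi)
              _ = 2^D * ∑ i ∈ s, ((2:ℝ) ^ d i)⁻¹ := by rw [Finset.mul_sum]
              _ ≤ 2^D * 1 := by
                  apply mul_le_mul_of_nonneg_left hkraft (by positivity)
              _ = 2^D := by ring
          have h2D : (2:ℕ) * 2^(D-1) = 2^D := by
            rw [← pow_succ' 2 (D-1)]
            exact congrArg (2 ^ ·) (by omega)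
          calc (∑ i ∈ s, w i) ≤ 2^D := by exact_mod_cast hcast
            _ = 2*2^(D-1) := h2D.symm)
        hcard2
      set B := s \ A with hBdef
      have hBsub : B ⊆ s := Finset.sdiff_subset
      have half : ∀ (C : Finset ℕ), C ⊆ s → (∑ i ∈ C, w i) ≤ 2^(D-1) →
          (∑ i ∈ C, ((2:ℝ) ^ (d i - 1))⁻¹) ≤ 1 := by
        intro C hCs hC
        have hcst : ((∑ i ∈ C, w i : ℕ):ℝ) ≤ (2:ℝ)^(D-1) := by exact_mod_cast hC
        push_cast at hcst
        have he : (∑ i ∈ C, (w i:ℝ)) = 2^D * ∑ i ∈ C, ((2:ℝ)^d i)⁻¹ := by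
          rw [Finset.mul_sum]
          exact Finset.sum_congr rfl (fun i hi => by exact_mod_cast hwR i (hCs hi))
        rw [he] at hcst
        have hD2 : (2:ℝ)^(D-1) * 2 = 2^D := by
          rw [← pow_succ]; exact congrArg ((2:ℝ) ^ ·) (by omega)
        have hpow2 : (0:ℝ) < 2^D := by positivity
        have h12 : (∑ i ∈ C, ((2:ℝ)^d i)⁻¹) ≤ 1/2 := by
          rw [show (1:ℝ)/2 = 2^(D-1) / 2^D by rw [← hD2]; field_simp]
          rw [le_div_iff₀ hpow2, mul_comm]
          linarith
        have hterm : ∀ i ∈ C, ((2:ℝ) ^ (d i - 1))⁻¹ = 2 * ((2:ℝ)^d i)⁻¹ := by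
          intro i hi
          have h1 : d i - 1 + 1 = d i := by have := hd1 i (hCs hi); omega
          have h2 : (2:ℝ)^(d i) = 2^(d i - 1) * 2 := by rw [← pow_succ, h1]
          rw [h2]
          rw [mul_inv]
          have : ((2:ℝ)^(d i -1)) ≠ 0 := by positivity
          field_simp
        calc (∑ i ∈ C, ((2:ℝ) ^ (d i - 1))⁻¹) = ∑ i ∈ C, 2 * ((2:ℝ)^d i)⁻¹ :=
              Finset.sum_congr rfl hterm
          _ = 2 * ∑ i ∈ C, ((2:ℝ)^d i)⁻¹ := by rw [Finset.mul_sum]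
          _ ≤ 2 * (1/2) := by linarith
          _ = 1 := by norm_num
      have hKA := half A hAsub hA1
      have hKB := half B hBsub hB1
      set sA := ∑ i ∈ A, lam i with hsAdef
      set sB := ∑ i ∈ B, lam i with hsBdef
      have hsplit : sB + sA = 1 := by
        rw [hsAdef, hsBdef, hBdef, Finset.sum_sdiff hAsub, hsum]
      have hsApos : 0 < sA := Finset.sum_pos (fun i hi => hpos i (hAsub hi)) hAne
      have hsBpos : 0 < sB := Finset.sum_pos (fun i hi => hpos i (hBsub hi)) hBne
      set yA := ∑ i ∈ A, (lam i / sA) • p i with hyAdef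
      set yB := ∑ i ∈ B, (lam i / sB) • p i with hyBdef
      have hwsum : ∀ (C : Finset ℕ) (c : ℝ), c = (∑ i ∈ C, lam i) → 0 < c →
          (∑ i ∈ C, lam i / c) = 1 := by
        intro C c hc hcpos
        rw [← Finset.sum_div, ← hc, div_self (ne_of_gt hcpos)]
      have hyAU : yA ∈ U := hU.sum_mem
        (fun i hi => le_of_lt (div_pos (hpos i (hAsub hi)) hsApos))
        (hwsum A sA hsAdef hsApos) (fun i hi => hmem i (hAsub hi))
      have hyBU : yB ∈ U := hU.sum_mem
        (fun i hi => le_of_lt (div_pos (hpos i (hBsub hi)) hsBpos))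
        (hwsum B sB hsBdef hsBpos) (fun i hi => hmem i (hBsub hi))
      have hdsum : ∀ (C : Finset ℕ), C ⊆ s → C.Nonempty → (∑ i ∈ C, (d i - 1)) < N := by
        intro C hCs hCne
        have h1 : (∑ i ∈ C, (d i - 1)) + C.card = ∑ i ∈ C, d i := by
          rw [Finset.card_eq_sum_ones C, ← Finset.sum_add_distrib]
          exact Finset.sum_congr rfl (fun i hi => by have := hd1 i (hCs hi); omega)
        have h2 : (∑ i ∈ C, d i) ≤ ∑ i ∈ s, d i := Finset.sum_le_sum_of_subset hCs
        have h3 : 1 ≤ C.card := Finset.Nonempty.card_pos hCne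
        have h4 : C.card ≤ ∑ i ∈ C, d i := by
          calc C.card = ∑ _i ∈ C, 1 := Finset.card_eq_sum_ones C
            _ ≤ ∑ i ∈ C, d i := Finset.sum_le_sum (fun i hi => hd1 i (hCs hi))
        omega
      have hIA := ih A (fun i => lam i / sA) p (fun i => d i - 1) (hdsum A hAsub hAne)
        hAne (fun i hi => div_pos (hpos i (hAsub hi)) hsApos)
        (hwsum A sA hsAdef hsApos) (fun i hi => hmem i (hAsub hi)) hKA
      have hIB := ih B (fun i => lam i / sB) p (fun i => d i - 1) (hdsum B hBsub hBne)
        hBne (fun i hi => div_pos (hpos i (hBsub hi)) hsBpos)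
        (hwsum B sB hsBdef hsBpos) (fun i hi => hmem i (hBsub hi)) hKB
      have hmul : ∀ (c : ℝ), c ≠ 0 → ∀ (C : Finset ℕ) (z : ℕ → ℝ),
          c * (∑ i ∈ C, lam i / c * z i) = ∑ i ∈ C, lam i * z i := by
        intro c hc C z
        rw [Finset.mul_sum]
        exact Finset.sum_congr rfl (fun i hi => by field_simp)
      have hsmulsum : ∀ (C : Finset ℕ) (c : ℝ), c ≠ 0 →
          c • (∑ i ∈ C, (lam i / c) • p i) = ∑ i ∈ C, lam i • p i := by
        intro C c hc
        rw [Finset.smul_sum]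
        exact Finset.sum_congr rfl (fun i hi => by
          rw [smul_smul]
          congr 1
          field_simp)
      have hxsplit : (∑ i ∈ s, lam i • p i) = sA • yA + sB • yB := by
        rw [hyAdef, hyBdef, hsmulsum A sA (ne_of_gt hsApos), hsmulsum B sB (ne_of_gt hsBpos)]
        rw [← Finset.sum_sdiff hAsub (f := fun i => lam i • p i), ← hBdef]
        abel
      have h1sA : 1 - sA = sB := by linarith
      have hcomb := hf yA hyAU yB hyBU sA (le_of_lt hsApos) (by linarith)
      rw [h1sA] at hcomb
      have hscaleA := mul_le_mul_of_nonneg_left hIA (le_of_lt hsApos)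
      have hscaleB := mul_le_mul_of_nonneg_left hIB (le_of_lt hsBpos)
      have hexpA : sA * ((∑ i ∈ A, lam i / sA * f (p i)) +
          ε * (∑ i ∈ A, lam i / sA * ((d i - 1 : ℕ):ℝ))) =
          (∑ i ∈ A, lam i * f (p i)) + ε * (∑ i ∈ A, lam i * ((d i - 1 : ℕ):ℝ)) := by
        rw [mul_add, hmul sA (ne_of_gt hsApos), mul_left_comm, hmul sA (ne_of_gt hsApos)]
      have hexpB : sB * ((∑ i ∈ B, lam i / sB * f (p i)) +
          ε * (∑ i ∈ B, lam i / sB * ((d i - 1 : ℕ):ℝ))) =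
          (∑ i ∈ B, lam i * f (p i)) + ε * (∑ i ∈ B, lam i * ((d i - 1 : ℕ):ℝ)) := by
        rw [mul_add, hmul sB (ne_of_gt hsBpos), mul_left_comm, hmul sB (ne_of_gt hsBpos)]
      have hsplitf : (∑ i ∈ B, lam i * f (p i)) + (∑ i ∈ A, lam i * f (p i)) =
          ∑ i ∈ s, lam i * f (p i) := by
        rw [hBdef]; exact Finset.sum_sdiff hAsub
      have hsplitd : (∑ i ∈ B, lam i * ((d i - 1 : ℕ):ℝ)) +
          (∑ i ∈ A, lam i * ((d i - 1 : ℕ):ℝ)) = ∑ i ∈ s, lam i * ((d i - 1 : ℕ):ℝ) := by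
        rw [hBdef]; exact Finset.sum_sdiff hAsub
      have hds : (∑ i ∈ s, lam i * ((d i - 1 : ℕ):ℝ)) = (∑ i ∈ s, lam i * (d i:ℝ)) - 1 := by
        calc (∑ i ∈ s, lam i * ((d i - 1 : ℕ):ℝ)) = ∑ i ∈ s, (lam i * (d i:ℝ) - lam i) :=
              Finset.sum_congr rfl (fun i hi => by
                rw [Nat.cast_sub (hd1 i hi)]; ring)
          _ = (∑ i ∈ s, lam i * (d i:ℝ)) - ∑ i ∈ s, lam i := by rw [Finset.sum_sub_distrib]
          _ = (∑ i ∈ s, lam i * (d i:ℝ)) - 1 := by rw [hsum]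
      calc f (∑ i ∈ s, lam i • p i) = f (sA • yA + sB • yB) := by rw [hxsplit]
        _ ≤ sA * f yA + sB * f yB + ε := hcomb
        _ ≤ (∑ i ∈ A, lam i * f (p i)) + ε * (∑ i ∈ A, lam i * ((d i - 1 : ℕ):ℝ)) +
            ((∑ i ∈ B, lam i * f (p i)) + ε * (∑ i ∈ B, lam i * ((d i - 1 : ℕ):ℝ))) + ε := by
          rw [← hexpA, ← hexpB]
          linarith
        _ = (∑ i ∈ s, lam i * f (p i)) + ε * (∑ i ∈ s, lam i * (d i:ℝ)) := by
          linear_combination hsplitf + ε * hsplitd + ε * hds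

lemma prefix_bound (m b : ℕ) (hb : b ≤ m) (hm : 0 < m) (ν : ℕ → ℝ)
    (hmono : ∀ t u, t ≤ u → u < m → ν t ≤ ν u)
    (hsum : (∑ t ∈ Finset.range m, ν t) = 1) :
    (∑ t ∈ Finset.range b, ν t) ≤ (b:ℝ) / m := by
  have hsplit : (∑ t ∈ Finset.range b, ν t) + (∑ t ∈ Finset.Ico b m, ν t) = 1 := by
    rw [Finset.range_eq_Ico, Finset.sum_Ico_consecutive ν (Nat.zero_le b) hb,
      ← Finset.range_eq_Ico, hsum]
  have h1 : ∀ u ∈ Finset.Ico b m, (∑ t ∈ Finset.range b, ν t) ≤ (b:ℝ) * ν u := by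
    intro u hu
    obtain ⟨hu1, hu2⟩ := Finset.mem_Ico.mp hu
    calc (∑ t ∈ Finset.range b, ν t) ≤ ∑ _t ∈ Finset.range b, ν u :=
          Finset.sum_le_sum (fun t ht => hmono t u (by
            have := Finset.mem_range.mp ht; omega) hu2)
      _ = (b:ℝ) * ν u := by rw [Finset.sum_const, Finset.card_range, nsmul_eq_mul]
  have key : ((m - b : ℕ):ℝ) * (∑ t ∈ Finset.range b, ν t) ≤
      (b:ℝ) * (∑ t ∈ Finset.Ico b m, ν t) := by
    calc ((m - b : ℕ):ℝ) * (∑ t ∈ Finset.range b, ν t)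
        = ∑ _u ∈ Finset.Ico b m, (∑ t ∈ Finset.range b, ν t) := by
          rw [Finset.sum_const, Nat.card_Ico, nsmul_eq_mul]
      _ ≤ ∑ u ∈ Finset.Ico b m, (b:ℝ) * ν u := Finset.sum_le_sum h1
      _ = (b:ℝ) * ∑ u ∈ Finset.Ico b m, ν u := by rw [Finset.mul_sum]
  have hcast : ((m - b : ℕ):ℝ) = (m:ℝ) - b := by
    rw [Nat.cast_sub hb]
  have hmpos : (0:ℝ) < m := by exact_mod_cast hm
  rw [hcast] at key
  have h4 : (b:ℝ) * (∑ t ∈ Finset.range b, ν t) + (b:ℝ) * (∑ t ∈ Finset.Ico b m, ν t)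
      = b := by linear_combination (b:ℝ) * hsplit
  rw [le_div_iff₀ hmpos]
  linarith [key, h4]


lemma kappa2_eq (n : ℕ) (hn : 1 ≤ n) :
    kappa2 n = (Nat.log 2 n : ℝ) +
      ((2*(n+1) - 2^(Nat.log 2 n + 1) : ℕ) : ℝ) / ((n:ℝ)+1) := by
  have hb : (2:ℝ) = ((2:ℕ):ℝ) := by norm_num
  have hfloor : ⌊Real.logb 2 (n:ℝ)⌋ = (Nat.log 2 n : ℤ) := by
    rw [hb, Real.floor_logb_natCast (by positivity), Int.log_natCast]
  have hk2 : n < 2^(Nat.log 2 n + 1) := Nat.lt_pow_succ_log_self (by norm_num) n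
  have hk1 : 2^(Nat.log 2 n) ≤ n := Nat.pow_log_le_self 2 (by omega)
  have hp : 2^(Nat.log 2 n + 1) = 2 * 2^(Nat.log 2 n) := by rw [pow_succ]; ring
  have hble : 2^(Nat.log 2 n + 1) ≤ 2*(n+1) := by omega
  rw [kappa2, hfloor, Nat.cast_sub hble]
  push_cast
  rw [zpow_natCast]
  push_cast
  ring

lemma jensen_kappa {n : ℕ} (hn : 1 ≤ n) {U : Set (Fin n → ℝ)} (hU : Convex ℝ U)
    {f : (Fin n → ℝ) → ℝ} {ε : ℝ} (hε : 0 < ε)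
    (hf : ∀ x ∈ U, ∀ y ∈ U, ∀ t : ℝ, 0 ≤ t → t ≤ 1 →
      f (t • x + (1 - t) • y) ≤ t * f x + (1 - t) * f y + ε)
    (s : Finset ℕ) (hcard : s.card ≤ n + 1) (lam : ℕ → ℝ) (p : ℕ → (Fin n → ℝ))
    (hpos : ∀ i ∈ s, 0 ≤ lam i) (hsum : (∑ i ∈ s, lam i) = 1)
    (hmem : ∀ i ∈ s, p i ∈ U) :
    f (∑ i ∈ s, lam i • p i) ≤ (∑ i ∈ s, lam i * f (p i)) + kappa2 n * ε := by
  classical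
  set s' := s.filter (fun i => lam i ≠ 0) with hs'def
  have hsub : s' ⊆ s := Finset.filter_subset _ _
  have hzero : ∀ i ∈ s, i ∉ s' → lam i = 0 := by
    intro i hi hni
    by_contra h
    exact hni (Finset.mem_filter.mpr ⟨hi, h⟩)
  have e1 : (∑ i ∈ s', lam i • p i) = ∑ i ∈ s, lam i • p i :=
    Finset.sum_subset hsub (fun i hi hni => by rw [hzero i hi hni, zero_smul])
  have e2 : (∑ i ∈ s', lam i * f (p i)) = ∑ i ∈ s, lam i * f (p i) :=
    Finset.sum_subset hsub (fun i hi hni => by rw [hzero i hi hni, zero_mul])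
  have hsum' : (∑ i ∈ s', lam i) = 1 := by
    rw [← hsum]; exact Finset.sum_subset hsub (fun i hi hni => hzero i hi hni)
  have hpos' : ∀ i ∈ s', 0 < lam i := fun i hi =>
    lt_of_le_of_ne (hpos i (hsub hi)) (Ne.symm (Finset.mem_filter.mp hi).2)
  have hne' : s'.Nonempty := by
    rcases Finset.eq_empty_or_nonempty s' with h | h
    · rw [h, Finset.sum_empty] at hsum'; norm_num at hsum'
    · exact h
  set k := Nat.log 2 n with hk
  set m := n + 1 with hm
  set P := 2^k with hP
  have hk1 : P ≤ n := Nat.pow_log_le_self 2 (by omega)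
  have hk2 : n < 2*P := by
    have h1 := Nat.lt_pow_succ_log_self (by norm_num : 1 < 2) n
    rwa [pow_succ, mul_comm (2^Nat.log 2 n) 2, ← hk, ← hP] at h1
  set a := 2*P - m with ha
  set b := 2*m - 2*P with hb
  have hab : a + b = m := by omega
  have hab2 : 2*a + b = 2*P := by omega
  set m' := s'.card with hm'
  have hm'1 : 1 ≤ m' := Finset.Nonempty.card_pos hne'
  have hm'le : m' ≤ m := by
    have := Finset.card_le_card hsub
    omega
  set b' := m' - a with hb'
  have hb'le : b' ≤ m' := by omega
  set e0 : Fin m' ≃o {x // x ∈ s'} := s'.orderIsoOfFin hm'.symm with he0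
  set μ0 : Fin m' → ℝ := fun x => lam ((e0 x) : ℕ) with hμ0
  set σ := Tuple.sort μ0 with hσ
  have hmono0 : Monotone (μ0 ∘ σ) := Tuple.monotone_sort μ0
  set eqv : Fin m' ≃ {x // x ∈ s'} := σ.trans e0.toEquiv with heqv
  set μ : Fin m' → ℝ := fun j => lam ((eqv j) : ℕ) with hμ
  have hμmono : Monotone μ := hmono0
  set d : ℕ → ℕ := fun i => if h : i ∈ s' then
      (if ((eqv.symm ⟨i, h⟩ : Fin m') : ℕ) < b' then k+1 else k) else 0 with hd
  have hde : ∀ j : Fin m', d ((eqv j) : ℕ) = if (j : ℕ) < b' then k+1 else k := by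
    intro j
    rw [hd]
    simp only
    rw [dif_pos (eqv j).2]
    have h1 : (⟨((eqv j):ℕ), (eqv j).2⟩ : {x // x ∈ s'}) = eqv j := Subtype.coe_eta _ _
    rw [h1, Equiv.symm_apply_apply]
  have htrans : ∀ F : ℕ → ℝ, (∑ i ∈ s', F i) = ∑ j : Fin m', F ((eqv j) : ℕ) := by
    intro F
    rw [← Finset.sum_coe_sort s' F]
    exact (Equiv.sum_comp eqv (fun x : {x // x ∈ s'} => F x)).symm
  have hPR : ((P:ℕ):ℝ) = (2:ℝ)^k := by rw [hP]; push_cast; ring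
  have h2k : (0:ℝ) < 2^k := by positivity
  have hsplitIco : ∀ z : ℕ → ℝ, (∑ t ∈ Finset.range m', z t)
      = (∑ t ∈ Finset.range b', z t) + ∑ t ∈ Finset.Ico b' m', z t := by
    intro z
    rw [Finset.range_eq_Ico, ← Finset.sum_Ico_consecutive z (Nat.zero_le b') hb'le,
      ← Finset.range_eq_Ico]
  have hKraft : (∑ i ∈ s', ((2:ℝ) ^ d i)⁻¹) ≤ 1 := by
    rw [htrans (fun i => ((2:ℝ) ^ d i)⁻¹)]
    have step1 : (∑ j : Fin m', ((2:ℝ) ^ d ((eqv j):ℕ))⁻¹)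
        = ∑ t ∈ Finset.range m', ((2:ℝ) ^ (if t < b' then k+1 else k))⁻¹ := by
      rw [← Fin.sum_univ_eq_sum_range (fun t => ((2:ℝ) ^ (if t < b' then k+1 else k))⁻¹) m']
      exact Finset.sum_congr rfl (fun j _ => by rw [hde j])
    rw [step1, hsplitIco]
    have hc1 : (∑ t ∈ Finset.range b', ((2:ℝ) ^ (if t < b' then k+1 else k))⁻¹)
        = (b':ℝ) * ((2:ℝ)^(k+1))⁻¹ := by
      rw [Finset.sum_congr rfl (fun t ht =>
        by rw [if_pos (Finset.mem_range.mp ht)]), Finset.sum_const, Finset.card_range,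
        nsmul_eq_mul]
    have hc2 : (∑ t ∈ Finset.Ico b' m', ((2:ℝ) ^ (if t < b' then k+1 else k))⁻¹)
        = ((m' - b' : ℕ):ℝ) * ((2:ℝ)^k)⁻¹ := by
      rw [Finset.sum_congr rfl (fun t ht =>
        by rw [if_neg (by have := (Finset.mem_Ico.mp ht).1; omega)]), Finset.sum_const,
        Nat.card_Ico, nsmul_eq_mul]
    rw [hc1, hc2]
    have hbb : (b':ℝ) ≤ (b:ℝ) := by exact_mod_cast Nat.cast_le.mpr (by omega : b' ≤ b)
    have haa : ((m' - b' : ℕ):ℝ) ≤ (a:ℝ) :=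
      Nat.cast_le.mpr (by omega : m' - b' ≤ a)
    have h2k1 : (0:ℝ) < 2^(k+1) := by positivity
    have hfin : (b:ℝ) * ((2:ℝ)^(k+1))⁻¹ + (a:ℝ) * ((2:ℝ)^k)⁻¹ = 1 := by
      have hcst : (2:ℝ)*(a:ℝ) + (b:ℝ) = 2*((2:ℝ)^k) := by
        have h0 := congrArg (Nat.cast (R := ℝ)) hab2
        push_cast at h0
        rw [hPR] at h0
        linarith
      rw [show ((2:ℝ)^(k+1)) = 2*2^k by rw [pow_succ]; ring]
      have h2kne : ((2:ℝ)^k) ≠ 0 := ne_of_gt h2k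
      field_simp
      linear_combination hcst
    calc (b':ℝ) * ((2:ℝ)^(k+1))⁻¹ + ((m' - b' : ℕ):ℝ) * ((2:ℝ)^k)⁻¹
        ≤ (b:ℝ) * ((2:ℝ)^(k+1))⁻¹ + (a:ℝ) * ((2:ℝ)^k)⁻¹ := by
          apply add_le_add
          · exact mul_le_mul_of_nonneg_right hbb (le_of_lt (inv_pos.mpr h2k1))
          · exact mul_le_mul_of_nonneg_right haa (le_of_lt (inv_pos.mpr h2k))
      _ = 1 := hfin
  -- weighted depth sum
  set ν : ℕ → ℝ := fun t => if h : t < m' then μ ⟨t, h⟩ else 0 with hν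
  have hμν : ∀ j : Fin m', lam ((eqv j):ℕ) = ν (j:ℕ) := by
    intro j
    rw [hν]
    simp only
    rw [dif_pos j.isLt]
  have hsν : (∑ t ∈ Finset.range m', ν t) = 1 := by
    calc (∑ t ∈ Finset.range m', ν t) = ∑ j : Fin m', ν (j:ℕ) :=
          (Fin.sum_univ_eq_sum_range ν m').symm
      _ = ∑ j : Fin m', lam ((eqv j):ℕ) := Finset.sum_congr rfl (fun j _ => (hμν j).symm)
      _ = ∑ i ∈ s', lam i := (htrans lam).symm
      _ = 1 := hsum'
  have hνmono : ∀ t u, t ≤ u → u < m' → ν t ≤ ν u := by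
    intro t u htu hu
    have ht : t < m' := lt_of_le_of_lt htu hu
    rw [hν]
    simp only
    rw [dif_pos ht, dif_pos hu]
    exact hμmono (show (⟨t, ht⟩ : Fin m') ≤ ⟨u, hu⟩ from htu)
  have hprefix : (∑ t ∈ Finset.range b', ν t) ≤ (b':ℝ)/(m':ℝ) :=
    prefix_bound m' b' hb'le (by omega) ν hνmono hsν
  have hwd : (∑ i ∈ s', lam i * (d i : ℝ)) ≤ (k:ℝ) + (b:ℝ)/(m:ℝ) := by
    rw [htrans (fun i => lam i * (d i : ℝ))]
    have step1 : (∑ j : Fin m', lam ((eqv j):ℕ) * (d ((eqv j):ℕ) : ℝ))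
        = ∑ t ∈ Finset.range m', ν t * ((if t < b' then k+1 else k : ℕ):ℝ) := by
      rw [← Fin.sum_univ_eq_sum_range (fun t => ν t * ((if t < b' then k+1 else k : ℕ):ℝ)) m']
      exact Finset.sum_congr rfl (fun j _ => by rw [hde j, hμν j])
    rw [step1]
    have h1 : ∀ t, ν t * ((if t < b' then k+1 else k : ℕ):ℝ)
        = ν t * (k:ℝ) + (if t < b' then ν t else 0) := by
      intro t; split_ifs with h <;> push_cast <;> ring
    rw [Finset.sum_congr rfl (fun t _ => h1 t), Finset.sum_add_distrib, ← Finset.sum_mul,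
      hsν, ← Finset.sum_filter]
    have h2 : (Finset.range m').filter (fun t => t < b') = Finset.range b' := by
      ext t
      simp only [Finset.mem_filter, Finset.mem_range]
      omega
    rw [h2]
    have hfrac : (b':ℝ)/(m':ℝ) ≤ (b:ℝ)/(m:ℝ) := by
      have hm'pos : (0:ℝ) < (m':ℝ) := by exact_mod_cast hm'1
      have hmpos : (0:ℝ) < (m:ℝ) := by exact_mod_cast (by omega : 0 < m)
      rw [div_le_div_iff₀ hm'pos hmpos]
      rcases le_or_gt m' a with hle | hgt
      · have hb0 : b' = 0 := by omega
        rw [hb0]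
        push_cast
        rw [zero_mul]
        exact mul_nonneg (Nat.cast_nonneg _) (Nat.cast_nonneg _)
      · have hb'c : (b':ℝ) = (m':ℝ) - (a:ℝ) := by
          rw [hb', Nat.cast_sub (le_of_lt hgt)]
        have hbc : (b:ℝ) = (m:ℝ) - (a:ℝ) := by
          have hba : b = m - a := by omega
          rw [hba, Nat.cast_sub (by omega : a ≤ m)]
        have hmm : (m':ℝ) ≤ (m:ℝ) := by exact_mod_cast hm'le
        have hanneg : (0:ℝ) ≤ (a:ℝ) := by positivity
        nlinarith [mul_le_mul_of_nonneg_left hmm hanneg]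
    linarith [hprefix, hfrac]
  -- final assembly
  have hN := jensen_tree hU hε hf ((∑ i ∈ s', d i) + 1) s' lam p d (by omega) hne' hpos'
    hsum' (fun i hi => hmem i (hsub hi)) hKraft
  rw [e1, e2] at hN
  have hkap : kappa2 n = (k:ℝ) + (b:ℝ)/(m:ℝ) := by
    rw [kappa2_eq n hn]
    have : (2*(n+1) - 2^(Nat.log 2 n + 1) : ℕ) = b := by
      rw [hb, hm, hP, hk]
      have : 2^(Nat.log 2 n + 1) = 2 * 2^(Nat.log 2 n) := by rw [pow_succ]; ring
      omega
    rw [this, ← hk]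
    have hmr : ((m:ℕ):ℝ) = (n:ℝ) + 1 := by rw [hm]; push_cast; ring
    rw [hmr]
  calc f (∑ i ∈ s, lam i • p i) ≤ (∑ i ∈ s, lam i * f (p i)) + ε * (∑ i ∈ s', lam i * (d i:ℝ)) := hN
    _ ≤ (∑ i ∈ s, lam i * f (p i)) + ε * ((k:ℝ) + (b:ℝ)/(m:ℝ)) := by
        have := mul_le_mul_of_nonneg_left hwd (le_of_lt hε)
        linarith
    _ = (∑ i ∈ s, lam i * f (p i)) + kappa2 n * ε := by rw [hkap]; ring

lemma caratheodory_min {n : ℕ} :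
    ∀ (N : ℕ) (s : Finset ℕ) (α : ℕ → ℝ) (p : ℕ → (Fin n → ℝ)) (c : ℕ → ℝ),
      s.card ≤ N → (∀ i ∈ s, 0 ≤ α i) → (∑ i ∈ s, α i) = 1 →
      ∃ t ⊆ s, t.card ≤ n + 1 ∧ ∃ β : ℕ → ℝ, (∀ i ∈ t, 0 ≤ β i) ∧ (∑ i ∈ t, β i) = 1 ∧
        (∑ i ∈ t, β i • p i) = (∑ i ∈ s, α i • p i) ∧
        (∑ i ∈ t, β i * c i) ≤ (∑ i ∈ s, α i * c i) := by
  intro N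
  induction N with
  | zero =>
    intro s α p c hcard hpos hsum
    exfalso
    have : s = ∅ := Finset.card_eq_zero.mp (by omega)
    rw [this, Finset.sum_empty] at hsum
    norm_num at hsum
  | succ N ih =>
    intro s α p c hcard hpos hsum
    by_cases hle : s.card ≤ n + 1
    · exact ⟨s, le_refl _, hle, α, hpos, hsum, rfl, le_refl _⟩
    push_neg at hle
    -- linear dependence of lifted points
    have hdep : ¬ LinearIndependent ℝ (fun x : {i // i ∈ s} => ((p x, 1) : (Fin n → ℝ) × ℝ)) := by
      intro hli
      have h1 := hli.fintype_card_le_finrank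
      rw [Fintype.card_coe] at h1
      have h2 : Module.finrank ℝ ((Fin n → ℝ) × ℝ) = n + 1 := by
        simp [Module.finrank_prod, Module.finrank_pi, Module.finrank_self]
      omega
    obtain ⟨g, hg0, x0, hx0⟩ := Fintype.not_linearIndependent_iff.mp hdep
    set w0 : ℕ → ℝ := fun i => if h : i ∈ s then g ⟨i, h⟩ else 0 with hw0def
    have hw0s : ∀ x : {i // i ∈ s}, w0 (x : ℕ) = g x := by
      intro x
      rw [hw0def]
      simp only
      rw [dif_pos x.2]
    have hsum0 : (∑ i ∈ s, w0 i • ((p i, 1) : (Fin n → ℝ) × ℝ)) = 0 := by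
      calc (∑ i ∈ s, w0 i • ((p i, 1) : (Fin n → ℝ) × ℝ))
          = ∑ x : {i // i ∈ s}, w0 (x:ℕ) • ((p (x:ℕ), 1) : (Fin n → ℝ) × ℝ) :=
            (Finset.sum_coe_sort s _).symm
        _ = ∑ x : {i // i ∈ s}, g x • ((p (x:ℕ), 1) : (Fin n → ℝ) × ℝ) :=
            Finset.sum_congr rfl (fun x _ => by rw [hw0s x])
        _ = 0 := hg0
    have hw0sum : (∑ i ∈ s, w0 i) = 0 := by
      have := congrArg Prod.snd hsum0
      rw [Prod.snd_sum] at this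
      simpa [Prod.smul_mk] using this
    have hw0p : (∑ i ∈ s, w0 i • p i) = 0 := by
      have := congrArg Prod.fst hsum0
      rw [Prod.fst_sum] at this
      simpa [Prod.smul_mk] using this
    have hw0ne : ∃ i ∈ s, w0 i ≠ 0 := ⟨(x0:ℕ), x0.2, by rw [hw0s x0]; exact hx0⟩
    obtain ⟨w, hwsum, hwp, hwc, hwne⟩ :
        ∃ w : ℕ → ℝ, (∑ i ∈ s, w i) = 0 ∧ (∑ i ∈ s, w i • p i) = 0 ∧
          0 ≤ (∑ i ∈ s, w i * c i) ∧ ∃ i ∈ s, w i ≠ 0 := by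
      rcases le_or_gt 0 (∑ i ∈ s, w0 i * c i) with h | h
      · exact ⟨w0, hw0sum, hw0p, h, hw0ne⟩
      · refine ⟨fun i => -(w0 i), ?_, ?_, ?_, ?_⟩
        · rw [Finset.sum_neg_distrib]
          rw [hw0sum]; ring
        · rw [Finset.sum_congr rfl (fun i _ => by rw [neg_smul] :
            ∀ i ∈ s, (-(w0 i)) • p i = -(w0 i • p i))]
          rw [Finset.sum_neg_distrib, hw0p]
          simp
        · have he : (∑ i ∈ s, -(w0 i) * c i) = -(∑ i ∈ s, w0 i * c i) := by
            rw [← Finset.sum_neg_distrib]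
            exact Finset.sum_congr rfl (fun i _ => by ring)
          rw [he]
          linarith
        · obtain ⟨i, hi, hne⟩ := hw0ne
          exact ⟨i, hi, by simpa using hne⟩
    obtain ⟨j, hjs, hjpos⟩ : ∃ j ∈ s, 0 < w j := by
      by_contra hcon
      push_neg at hcon
      obtain ⟨i, hi, hne⟩ := hwne
      exact hne ((Finset.sum_eq_zero_iff_of_nonpos hcon).mp hwsum i hi)
    set Pos := s.filter (fun i => 0 < w i) with hPos
    have hPosne : Pos.Nonempty := ⟨j, Finset.mem_filter.mpr ⟨hjs, hjpos⟩⟩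
    obtain ⟨i₀, hi₀P, hmin⟩ := Finset.exists_min_image Pos (fun i => α i / w i) hPosne
    have hi₀s : i₀ ∈ s := (Finset.mem_filter.mp hi₀P).1
    have hwi₀ : 0 < w i₀ := (Finset.mem_filter.mp hi₀P).2
    set τ := α i₀ / w i₀ with hτ
    have hτ0 : 0 ≤ τ := div_nonneg (hpos i₀ hi₀s) (le_of_lt hwi₀)
    set β : ℕ → ℝ := fun i => α i - τ * w i with hβ
    have hβ0 : ∀ i ∈ s, 0 ≤ β i := by
      intro i hi
      rw [hβ]
      simp only
      rcases le_or_gt (w i) 0 with h | h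
      · have : τ * w i ≤ 0 := mul_nonpos_of_nonneg_of_nonpos hτ0 h
        have := hpos i hi
        linarith
      · have hiP : i ∈ Pos := Finset.mem_filter.mpr ⟨hi, h⟩
        have h1 : τ ≤ α i / w i := hmin i hiP
        have h2 : τ * w i ≤ α i := (le_div_iff₀ h).mp h1
        linarith
    have hβi₀ : β i₀ = 0 := by
      rw [hβ]
      simp only
      rw [hτ, div_mul_cancel₀ _ (ne_of_gt hwi₀)]
      ring
    have hβsum : (∑ i ∈ s, β i) = 1 := by
      rw [hβ]
      simp only
      rw [Finset.sum_sub_distrib, ← Finset.mul_sum, hsum, hwsum]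
      ring
    have hβp : (∑ i ∈ s, β i • p i) = ∑ i ∈ s, α i • p i := by
      rw [hβ]
      simp only
      rw [Finset.sum_congr rfl (fun i _ => by rw [sub_smul, mul_smul] :
        ∀ i ∈ s, (α i - τ * w i) • p i = α i • p i - τ • (w i • p i))]
      rw [Finset.sum_sub_distrib, ← Finset.smul_sum, hwp, smul_zero, sub_zero]
    have hβc : (∑ i ∈ s, β i * c i) ≤ ∑ i ∈ s, α i * c i := by
      rw [hβ]
      simp only
      have he : (∑ i ∈ s, (α i - τ * w i) * c i)
          = (∑ i ∈ s, α i * c i) - τ * ∑ i ∈ s, w i * c i := by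
        rw [Finset.mul_sum, ← Finset.sum_sub_distrib]
        exact Finset.sum_congr rfl (fun i _ => by ring)
      rw [he]
      nlinarith [mul_nonneg hτ0 hwc]
    set s2 := s.erase i₀ with hs2
    have hcard2 : s2.card ≤ N := by
      rw [hs2, Finset.card_erase_of_mem hi₀s]
      omega
    have hβsum2 : (∑ i ∈ s2, β i) = 1 := by
      rw [hs2, Finset.sum_erase s hβi₀, hβsum]
    obtain ⟨t, hts, htcard, γ, hγ0, hγsum, hγp, hγc⟩ := ih s2 β p c hcard2
      (fun i hi => hβ0 i (Finset.mem_of_mem_erase hi)) hβsum2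
    refine ⟨t, hts.trans (Finset.erase_subset _ _), htcard, γ, hγ0, hγsum, ?_, ?_⟩
    · rw [hγp, hs2, Finset.sum_erase s (show β i₀ • p i₀ = 0 by rw [hβi₀, zero_smul]), hβp]
    · calc (∑ i ∈ t, γ i * c i) ≤ ∑ i ∈ s2, β i * c i := hγc
        _ = ∑ i ∈ s, β i * c i := by
            rw [hs2, Finset.sum_erase s (show β i₀ * c i₀ = 0 by rw [hβi₀, zero_mul])]
        _ ≤ ∑ i ∈ s, α i * c i := hβc

theorem stmt17 (n : ℕ) (hn : 1 ≤ n) (ε : ℝ) (hε : 0 < ε)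
    (U : Set (Fin n → ℝ)) (hU : Convex ℝ U) (f : (Fin n → ℝ) → ℝ)
    (hf : ∀ x ∈ U, ∀ y ∈ U, ∀ t : ℝ, 0 ≤ t → t ≤ 1 →
      f (t • x + (1 - t) • y) ≤ t * f x + (1 - t) * f y + ε) :
    ∃ g g₀ : (Fin n → ℝ) → ℝ, ConvexOn ℝ U g ∧ ConvexOn ℝ U g₀ ∧
      ∀ x ∈ U, g x ≤ f x ∧ f x ≤ g x + kappa2 n * ε ∧
        |f x - g₀ x| ≤ kappa2 n * ε / 2 := by
  classical
  set S : (Fin n → ℝ) → Set ℝ := fun x =>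
    {v | ∃ (s : Finset ℕ) (lam : ℕ → ℝ) (p : ℕ → (Fin n → ℝ)),
      s.card ≤ n + 1 ∧ (∀ i ∈ s, 0 ≤ lam i) ∧ (∑ i ∈ s, lam i) = 1 ∧
      (∀ i ∈ s, p i ∈ U) ∧ (∑ i ∈ s, lam i • p i) = x ∧ v = ∑ i ∈ s, lam i * f (p i)}
    with hS
  have hSne : ∀ x ∈ U, (f x) ∈ S x := by
    intro x hx
    refine ⟨{0}, fun _ => 1, fun _ => x, by simp, by simp, by simp, by simp [hx], ?_, by simp⟩
    simp
  have hSlb : ∀ x ∈ U, ∀ v ∈ S x, f x - kappa2 n * ε ≤ v := by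
    intro x hx v hv
    obtain ⟨s, lam, p, hcard, hpos, hsum, hmem, hrep, hval⟩ := hv
    have h1 := jensen_kappa hn hU hε hf s hcard lam p hpos hsum hmem
    rw [hrep] at h1
    rw [hval]
    linarith
  set g : (Fin n → ℝ) → ℝ := fun x => sInf (S x) with hg
  have hbdd : ∀ x ∈ U, BddBelow (S x) :=
    fun x hx => ⟨f x - kappa2 n * ε, fun v hv => hSlb x hx v hv⟩
  have hgle : ∀ x ∈ U, g x ≤ f x := fun x hx => csInf_le (hbdd x hx) (hSne x hx)
  have hlef : ∀ x ∈ U, f x - kappa2 n * ε ≤ g x :=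
    fun x hx => le_csInf ⟨f x, hSne x hx⟩ (hSlb x hx)
  have hkey : ∀ x ∈ U, ∀ y ∈ U, ∀ aa bb : ℝ, 0 ≤ aa → 0 ≤ bb → aa + bb = 1 →
      ∀ v₁ ∈ S x, ∀ v₂ ∈ S y, g (aa • x + bb • y) ≤ aa * v₁ + bb * v₂ := by
    intro x hx y hy aa bb haa hbb hab v₁ hv₁ v₂ hv₂
    obtain ⟨s₁, lam₁, p₁, hcard₁, hpos₁, hsum₁, hmem₁, hrep₁, hval₁⟩ := hv₁
    obtain ⟨s₂, lam₂, p₂, hcard₂, hpos₂, hsum₂, hmem₂, hrep₂, hval₂⟩ := hv₂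
    set Nsh := (s₁.sup id) + 1 with hNsh
    have hs₁lt : ∀ i ∈ s₁, i < Nsh := by
      intro i hi
      have : id i ≤ s₁.sup id := Finset.le_sup hi
      simp only [id] at this
      omega
    set s₂' := s₂.image (fun i => i + Nsh) with hs₂'
    have hdisj : Disjoint s₁ s₂' := by
      rw [Finset.disjoint_left]
      intro i hi hi'
      obtain ⟨j, _, hj⟩ := Finset.mem_image.mp hi'
      have := hs₁lt i hi
      omega
    set su := s₁ ∪ s₂' with hsu
    set lam : ℕ → ℝ := fun i => if i ∈ s₁ then aa * lam₁ i else bb * lam₂ (i - Nsh) with hlam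
    set p : ℕ → (Fin n → ℝ) := fun i => if i ∈ s₁ then p₁ i else p₂ (i - Nsh) with hp
    have hinj : ∀ i ∈ s₂, ∀ j ∈ s₂, i + Nsh = j + Nsh → i = j := by
      intro i _ j _ h; omega
    have himg : ∀ (F : ℕ → ℝ), (∑ i ∈ s₂', F i) = ∑ j ∈ s₂, F (j + Nsh) :=
      fun F => Finset.sum_image hinj
    have himgv : ∀ (F : ℕ → (Fin n → ℝ)), (∑ i ∈ s₂', F i) = ∑ j ∈ s₂, F (j + Nsh) :=
      fun F => Finset.sum_image hinj
    have hnotin : ∀ j, j + Nsh ∉ s₁ := by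
      intro j hj
      have := hs₁lt _ hj
      omega
    have hlam2 : ∀ j, lam (j + Nsh) = bb * lam₂ j := by
      intro j
      rw [hlam]
      simp only
      rw [if_neg (hnotin j), Nat.add_sub_cancel]
    have hp2 : ∀ j, p (j + Nsh) = p₂ j := by
      intro j
      rw [hp]
      simp only
      rw [if_neg (hnotin j), Nat.add_sub_cancel]
    have hlam1 : ∀ i ∈ s₁, lam i = aa * lam₁ i := by
      intro i hi
      rw [hlam]; simp only; rw [if_pos hi]
    have hp1 : ∀ i ∈ s₁, p i = p₁ i := by
      intro i hi
      rw [hp]; simp only; rw [if_pos hi]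
    have hsumu : ∀ (F G₁ G₂ : ℕ → ℝ), (∀ i ∈ s₁, F i = G₁ i) → (∀ j ∈ s₂, F (j + Nsh) = G₂ j) →
        (∑ i ∈ su, F i) = (∑ i ∈ s₁, G₁ i) + ∑ j ∈ s₂, G₂ j := by
      intro F G₁ G₂ h1 h2
      rw [hsu, Finset.sum_union hdisj, Finset.sum_congr rfl h1, himg F,
        Finset.sum_congr rfl h2]
    have hposu : ∀ i ∈ su, 0 ≤ lam i := by
      intro i hi
      rcases Finset.mem_union.mp hi with h | h
      · rw [hlam1 i h]; exact mul_nonneg haa (hpos₁ i h)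
      · obtain ⟨j, hj, rfl⟩ := Finset.mem_image.mp h
        rw [hlam2 j]; exact mul_nonneg hbb (hpos₂ j hj)
    have hsumu1 : (∑ i ∈ su, lam i) = 1 := by
      rw [hsumu lam (fun i => aa * lam₁ i) (fun j => bb * lam₂ j) hlam1 (fun j _ => hlam2 j),
        ← Finset.mul_sum, ← Finset.mul_sum, hsum₁, hsum₂]
      linarith
    have hmemu : ∀ i ∈ su, p i ∈ U := by
      intro i hi
      rcases Finset.mem_union.mp hi with h | h
      · rw [hp1 i h]; exact hmem₁ i h
      · obtain ⟨j, hj, rfl⟩ := Finset.mem_image.mp h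
        rw [hp2 j]; exact hmem₂ j hj
    have hrepu : (∑ i ∈ su, lam i • p i) = aa • x + bb • y := by
      rw [hsu, Finset.sum_union hdisj, himgv (fun i => lam i • p i)]
      have e1 : (∑ i ∈ s₁, lam i • p i) = aa • x := by
        have h' : ∀ i ∈ s₁, lam i • p i = aa • (lam₁ i • p₁ i) := by
          intro i hi
          rw [hlam1 i hi, hp1 i hi, mul_smul]
        rw [Finset.sum_congr rfl h', ← Finset.smul_sum, hrep₁]
      have e2 : (∑ j ∈ s₂, lam (j + Nsh) • p (j + Nsh)) = bb • y := by
        have h' : ∀ j ∈ s₂, lam (j + Nsh) • p (j + Nsh) = bb • (lam₂ j • p₂ j) := by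
          intro j hj
          rw [hlam2 j, hp2 j, mul_smul]
        rw [Finset.sum_congr rfl h', ← Finset.smul_sum, hrep₂]
      rw [e1, e2]
    have hvalu : (∑ i ∈ su, lam i * f (p i)) = aa * v₁ + bb * v₂ := by
      rw [hsumu (fun i => lam i * f (p i)) (fun i => aa * (lam₁ i * f (p₁ i)))
        (fun j => bb * (lam₂ j * f (p₂ j)))
        (fun i hi => by
          show lam i * f (p i) = aa * (lam₁ i * f (p₁ i))
          rw [hlam1 i hi, hp1 i hi]; ring)
        (fun j _ => by
          show lam (j + Nsh) * f (p (j + Nsh)) = bb * (lam₂ j * f (p₂ j))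
          rw [hlam2 j, hp2 j]; ring)]
      rw [← Finset.mul_sum, ← Finset.mul_sum, ← hval₁, ← hval₂]
    obtain ⟨t, hts, htcard, β, hβ0, hβsum, hβp, hβc⟩ :=
      caratheodory_min su.card su lam p (fun i => f (p i)) le_rfl hposu hsumu1
    have hzU : aa • x + bb • y ∈ U := hU hx hy haa hbb hab
    have hmemS : (∑ i ∈ t, β i * f (p i)) ∈ S (aa • x + bb • y) := by
      exact ⟨t, β, p, htcard, hβ0, hβsum, fun i hi => hmemu i (hts hi), by rw [hβp, hrepu], rfl⟩
    calc g (aa • x + bb • y) ≤ ∑ i ∈ t, β i * f (p i) := csInf_le (hbdd _ hzU) hmemS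
      _ ≤ ∑ i ∈ su, lam i * f (p i) := hβc
      _ = aa * v₁ + bb * v₂ := hvalu
  have hconv : ∀ x ∈ U, ∀ y ∈ U, ∀ aa bb : ℝ, 0 ≤ aa → 0 ≤ bb → aa + bb = 1 →
      g (aa • x + bb • y) ≤ aa * g x + bb * g y := by
    intro x hx y hy aa bb haa hbb hab
    have h1 : ∀ v₂ ∈ S y, g (aa • x + bb • y) ≤ aa * g x + bb * v₂ := by
      intro v₂ hv₂
      rcases eq_or_lt_of_le haa with heq | hlt
      · have h0 := hkey x hx y hy aa bb haa hbb hab (f x) (hSne x hx) v₂ hv₂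
        rw [← heq] at h0 ⊢
        simpa using h0
      · have h2 : (g (aa • x + bb • y) - bb * v₂)/aa ≤ g x := by
          apply le_csInf ⟨f x, hSne x hx⟩
          intro v₁ hv₁
          rw [div_le_iff₀ hlt]
          have h0 := hkey x hx y hy aa bb haa hbb hab v₁ hv₁ v₂ hv₂
          linarith
        rw [div_le_iff₀ hlt] at h2
        linarith
    rcases eq_or_lt_of_le hbb with heq | hlt
    · have h0 := h1 (f y) (hSne y hy)
      rw [← heq] at h0 ⊢
      simpa using h0
    · have h2 : (g (aa • x + bb • y) - aa * g x)/bb ≤ g y := by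
        apply le_csInf ⟨f y, hSne y hy⟩
        intro v₂ hv₂
        rw [div_le_iff₀ hlt]
        have h0 := h1 v₂ hv₂
        linarith
      rw [div_le_iff₀ hlt] at h2
      linarith
  have hgconv : ConvexOn ℝ U g := by
    refine ⟨hU, ?_⟩
    intro x hx y hy aa bb haa hbb hab
    simpa [smul_eq_mul] using hconv x hx y hy aa bb haa hbb hab
  refine ⟨g, fun x => g x + kappa2 n * ε / 2, hgconv, hgconv.add_const _, ?_⟩
  intro x hx
  refine ⟨hgle x hx, by linarith [hlef x hx], ?_⟩
  rw [abs_le]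
  constructor
  · linarith [hgle x hx]
  · linarith [hlef x hx]
end
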